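/- arXiv:2604.17907 — 5 statements merged into one kernel-verified Lean document; each statement's English description precedes it below -/
import Mathlib

section
/- Let H be a finite simple graph on N vertices with Laplacian eigenvalues λ_1(H) ≤ ⋯ ≤ λ_N(H), let m ≥ 2 be an integer, and let G be the graph obtained from H by attaching m−1 new pendant vertices to each vertex of H (so G has vertex set V(H) ∪ (V(H) × {1,…,m−1}), with u,v ∈ V(H) adjacent in G iff they are adjacent in H, each v ∈ V(H) adjacent to (v,r) for 1 ≤ r ≤ m−1, and no other edges). Define θ₋(λ) = (m + λ − √((m+λ)² − 4λ))/2 and θ₊(λ) = (m + λ + √((m+λ)² − 4λ))/2. Then the multiset of Laplacian eigenvalues of G equals {1 with multiplicity N(m−2)} together with the multiset {θ₋(λ_i(H)), θ₊(λ_i(H)) : 1 ≤ i ≤ N}. -/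
open Matrix SimpleGraph

attribute [local instance] Classical.propDecidable

/-- The corona `H ∘ K̄ₖ`: attach `k` new pendant vertices to every vertex of `H`.
Vertices are `V ⊕ V × Fin k`; `inl u ~ inl v` iff `H.Adj u v`, and `inl v ~ inr (v, r)`. -/
def corona {V : Type*} (H : SimpleGraph V) (k : ℕ) :
    SimpleGraph (V ⊕ V × Fin k) where
  Adj x y :=
    match x, y with
    | Sum.inl u, Sum.inl v => H.Adj u v
    | Sum.inl u, Sum.inr (v, _) => u = v
    | Sum.inr (u, _), Sum.inl v => u = v
    | Sum.inr _, Sum.inr _ => False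
  symm := by
    exact ⟨by rintro (u | ⟨u, r⟩) (v | ⟨v, s⟩) h <;> simp_all [SimpleGraph.adj_comm]⟩
  loopless := by
    exact ⟨by rintro (u | ⟨u, r⟩) h <;> simp_all⟩

/-- `θ₋(λ) = (m + λ − √((m+λ)² − 4λ))/2`. -/
noncomputable def thetaMinus (m : ℕ) (lam : ℝ) : ℝ :=
  (m + lam - Real.sqrt ((m + lam) ^ 2 - 4 * lam)) / 2

/-- `θ₊(λ) = (m + λ + √((m+λ)² − 4λ))/2`. -/
noncomputable def thetaPlus (m : ℕ) (lam : ℝ) : ℝ :=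
  (m + lam + Real.sqrt ((m + lam) ^ 2 - 4 * lam)) / 2

/-! Order the vertices of `G` as `V(H)` followed by the pendant vertices. Then `x I - L_G` is a
block matrix whose pendant block is `(x - 1) I`, so for `x ≠ 1` its Schur complement gives
`det (x I - L_G) = (x - 1)^(N (m - 1)) det ((x - (m - 1) - (m - 1)/(x - 1)) I - L_H)`.
Multiplying the factor `x - (m - 1) - (m - 1)/(x - 1) - λ` by `x - 1` yields
`x² - (m + λ) x + λ = (x - θ₋(λ)) (x - θ₊(λ))`, the discriminant being
`(λ + m - 2)² + 4 (m - 1) ≥ 0`. Two polynomials agreeing off `x = 1` are equal. -/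

open Polynomial

def pendantIncidence (R V ι : Type*) [Zero R] [One R] [DecidableEq V] : Matrix V (V × ι) R :=
  of fun v p => if v = p.1 then 1 else 0

lemma pendantIncidence_mul_transpose (R V ι : Type*) [NonAssocSemiring R] [Fintype V]
    [DecidableEq V] [Fintype ι] :
    pendantIncidence R V ι * (pendantIncidence R V ι)ᵀ = (Fintype.card ι : R) • 1 := by
  ext u v
  rw [mul_apply, Fintype.sum_prod_type]
  obtain rfl | huv := eq_or_ne u v
  · simp [pendantIncidence]
  · simp [pendantIncidence, one_apply, huv]

section Corona

variable {V : Type*} (H : SimpleGraph V) (k : ℕ)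

@[simp] lemma corona_adj_inl_inl (u v : V) :
    (corona H k).Adj (.inl u) (.inl v) ↔ H.Adj u v := Iff.rfl

@[simp] lemma corona_adj_inl_inr (u v : V) (r : Fin k) :
    (corona H k).Adj (.inl u) (.inr (v, r)) ↔ u = v := Iff.rfl

@[simp] lemma corona_adj_inr_inl (u v : V) (r : Fin k) :
    (corona H k).Adj (.inr (u, r)) (.inl v) ↔ u = v := Iff.rfl

@[simp] lemma not_corona_adj_inr_inr (p q : V × Fin k) :
    ¬ (corona H k).Adj (.inr p) (.inr q) := id

variable [Fintype V]

lemma corona_degree_inl (v : V) : (corona H k).degree (.inl v) = H.degree v + k := by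
  rw [← Nat.cast_id ((corona H k).degree _), degree_eq_sum_if_adj, Fintype.sum_sum_type,
    Fintype.sum_prod_type]
  simp [← card_neighborFinset_eq_degree, neighborFinset_eq_filter]

lemma corona_degree_inr (p : V × Fin k) : (corona H k).degree (.inr p) = 1 := by
  obtain ⟨v, r⟩ := p
  rw [← Nat.cast_id ((corona H k).degree _), degree_eq_sum_if_adj, Fintype.sum_sum_type]
  simp

variable [DecidableEq V] (R : Type*) [Ring R]

lemma lapMatrix_corona :
    (corona H k).lapMatrix R =
      fromBlocks (H.lapMatrix R + (k : R) • 1) (-pendantIncidence R V (Fin k))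
        (-(pendantIncidence R V (Fin k))ᵀ) 1 := by
  ext (u | ⟨u, r⟩) (v | ⟨v, s⟩)
  · obtain rfl | huv := eq_or_ne u v
    · simp [lapMatrix, degMatrix, corona_degree_inl]
    · simp [lapMatrix, degMatrix, huv]
  · simp [lapMatrix, degMatrix, pendantIncidence]
  · simp [lapMatrix, degMatrix, pendantIncidence, eq_comm]
  · obtain huv | huv := eq_or_ne (u, r) (v, s)
    · simp [lapMatrix, degMatrix, huv, corona_degree_inr]
    · simp [lapMatrix, degMatrix, huv, one_apply]

end Corona

lemma eval_charpoly_lapMatrix_corona {V : Type*} [Fintype V] [DecidableEq V] (H : SimpleGraph V)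
    (k : ℕ) {R : Type*} [Field R] {x : R} (hx : x ≠ 1) :
    ((corona H k).lapMatrix R).charpoly.eval x =
      (x - 1) ^ (Fintype.card V * k) * (H.lapMatrix R).charpoly.eval (x - k - k / (x - 1)) := by
  have : Invertible (x - 1) := invertibleOfNonzero (sub_ne_zero.mpr hx)
  have : Invertible (scalar (V × Fin k) (x - 1)) := Invertible.map (scalar _) _
  have hblock : scalar _ x - (corona H k).lapMatrix R =
      fromBlocks (scalar V (x - k) - H.lapMatrix R) (pendantIncidence R V (Fin k))
        (pendantIncidence R V (Fin k))ᵀ (scalar _ (x - 1)) := by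
    rw [lapMatrix_corona]
    ext (i | i) (j | j) <;> simp [Matrix.sub_apply, one_apply, diagonal_apply] <;> split_ifs <;> ring
  have hschur : pendantIncidence R V (Fin k) * scalar (V × Fin k) (x - 1)⁻¹ *
      (pendantIncidence R V (Fin k))ᵀ = scalar V (k / (x - 1)) := by
    rw [scalar_apply, ← smul_one_eq_diagonal, Matrix.mul_smul, Matrix.mul_one, Matrix.smul_mul,
      pendantIncidence_mul_transpose, smul_smul, Fintype.card_fin, smul_one_eq_diagonal,
      inv_mul_eq_div, scalar_apply]
  rw [eval_charpoly, eval_charpoly, hblock, det_fromBlocks₂₂, ← map_invOf, invOf_eq_inv,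
    hschur, sub_right_comm, ← map_sub]
  simp [scalar_apply, ← smul_one_eq_diagonal]

lemma sub_thetaMinus_mul_sub_thetaPlus {m : ℕ} (hm : 1 ≤ m) (lam x : ℝ) :
    (x - thetaMinus m lam) * (x - thetaPlus m lam) = x ^ 2 - (m + lam) * x + lam := by
  have hm' : (1 : ℝ) ≤ m := by exact_mod_cast hm
  have hdisc : (m + lam) ^ 2 - 4 * lam = (lam + m - 2) ^ 2 + 4 * (m - 1) := by ring
  have hsqrt := Real.sq_sqrt (by nlinarith : 0 ≤ (m + lam) ^ 2 - 4 * lam)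
  unfold thetaMinus thetaPlus
  linear_combination (-1 / 4 : ℝ) * hsqrt

lemma charpoly_lapMatrix_corona {V : Type*} [Fintype V] [DecidableEq V] (H : SimpleGraph V)
    (hH : (H.lapMatrix ℝ).IsHermitian) (k : ℕ) :
    ((corona H (k + 1)).lapMatrix ℝ).charpoly =
      ((Multiset.replicate (Fintype.card V * k) 1 + (Finset.univ.val.map hH.eigenvalues).bind
        fun lam => {thetaMinus (k + 2) lam, thetaPlus (k + 2) lam}).map (X - C ·)).prod := by
  refine eq_of_infinite_eval_eq _ _ ((Set.finite_singleton 1).infinite_compl.mono fun x hx ↦ ?_)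
  have hx1 : x - 1 ≠ 0 := sub_ne_zero.mpr hx
  rw [Set.mem_ofPred_eq, eval_charpoly_lapMatrix_corona H _ hx, hH.charpoly_eq]
  simp only [Multiset.map_add, Multiset.prod_add, Multiset.map_replicate, Multiset.prod_replicate,
    Multiset.map_bind, Multiset.prod_bind, Multiset.insert_eq_cons, Multiset.map_cons,
    Multiset.map_singleton, Multiset.prod_cons, Multiset.prod_singleton, Multiset.map_map,
    Function.comp_def, Finset.prod_map_val, eval_mul, eval_pow, eval_prod, eval_sub, eval_X, eval_C,
    RCLike.ofReal_real_eq_id, id_eq, sub_thetaMinus_mul_sub_thetaPlus (by omega : 1 ≤ k + 2)]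
  rw [mul_add_one, pow_add, mul_assoc, ← Finset.card_univ, ← Finset.prod_const,
    ← Finset.prod_mul_distrib]
  congr 1
  refine Finset.prod_congr rfl fun i _ ↦ ?_
  field_simp
  push_cast
  ring

/-- If `G` is obtained from an `N`-vertex graph `H` by attaching `m-1`
pendant vertices to every vertex of `H`, then the multiset of Laplacian eigenvalues of `G`
is `{1` with multiplicity `N(m-2)}` together with `{θ₋(λᵢ(H)), θ₊(λᵢ(H)) : 1 ≤ i ≤ N}`. -/
theorem stmt2 {N : ℕ} (H : SimpleGraph (Fin N)) (m : ℕ) (hm : 2 ≤ m)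
    (hH : (H.lapMatrix ℝ).IsHermitian)
    (hG : ((corona H (m - 1)).lapMatrix ℝ).IsHermitian) :
    Finset.univ.val.map hG.eigenvalues =
      Multiset.replicate (N * (m - 2)) 1 +
        (Finset.univ.val.map hH.eigenvalues).bind
          (fun lam => {thetaMinus m lam, thetaPlus m lam}) := by
  obtain ⟨k, rfl⟩ := Nat.exists_eq_add_of_le' hm
  have hroots := hG.roots_charpoly_eq_eigenvalues
  -- `k + 2 - 1` reduces to `k + 1` only definitionally, hence the `show`.
  rw [show ((corona H (k + 2 - 1)).lapMatrix ℝ).charpoly = _ from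
    charpoly_lapMatrix_corona H hH k, roots_multiset_prod_X_sub_C] at hroots
  simpa using hroots.symm
end

section
/- Let r ≥ 1 and let w_1, …, w_r be positive real numbers, cyclically ordered, with w_1 + ⋯ + w_r = n and max_{1 ≤ i ≤ r} w_i < n/2. Then there exists a nonempty cyclic interval I ⊆ {1, …, r} such that n/3 ≤ Σ_{i ∈ I} w_i ≤ n/2. -/
/-!
A single weight of size at least `n/3` is already such an interval. Otherwise every weight is
below `n/3`, so the first prefix sum `s = w₁ + ⋯ + w_l` reaching `n/3` is still below `2n/3`;
then either `s ≤ n/2`, or the complementary arc has sum `n - s ∈ [n/3, n/2]`.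
-/

open Finset

theorem exists_le_sum_range_lt_add {α : Type*} [AddCommGroup α] [LinearOrder α]
    [IsOrderedAddMonoid α] {f : ℕ → α} {c δ : α} {L : ℕ} (hf : ∀ k < L, f k < δ) (hc : 0 < c)
    (hL : c ≤ ∑ k ∈ range L, f k) :
    ∃ l, 1 ≤ l ∧ l ≤ L ∧ c ≤ ∑ k ∈ range l, f k ∧ ∑ k ∈ range l, f k < c + δ := by
  classical
  have hex : ∃ l, c ≤ ∑ k ∈ range l, f k := ⟨L, hL⟩
  set l := Nat.find hex
  have hlL : l ≤ L := Nat.find_min' hex hL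
  have hspec : c ≤ ∑ k ∈ range l, f k := Nat.find_spec hex
  have hl0 : l ≠ 0 := by
    rintro h
    rw [h, sum_range_zero] at hspec
    exact hc.not_ge hspec
  obtain ⟨m, hm⟩ := Nat.exists_eq_succ_of_ne_zero hl0
  have hprev : ∑ k ∈ range m, f k < c := not_le.mp (Nat.find_min hex (by omega))
  refine ⟨l, by omega, hlL, hspec, ?_⟩
  rw [hm, sum_range_succ]
  exact add_lt_add hprev (hf m (by omega))

section CyclicInterval

variable {r : ℕ} (hr : 0 < r) (w : Fin r → ℝ)

def cyclicIntervalSum (a l : ℕ) : ℝ :=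
  ∑ t ∈ range l, w ⟨(a + t) % r, Nat.mod_lt _ hr⟩

theorem cyclicIntervalSum_add (a l m : ℕ) :
    cyclicIntervalSum hr w a (l + m) =
      cyclicIntervalSum hr w a l + cyclicIntervalSum hr w (a + l) m := by
  simp only [cyclicIntervalSum, sum_range_add, add_assoc]

theorem cyclicIntervalSum_one (i : Fin r) : cyclicIntervalSum hr w i 1 = w i := by
  simp [cyclicIntervalSum, Nat.mod_eq_of_lt i.isLt]

theorem cyclicIntervalSum_zero_self : cyclicIntervalSum hr w 0 r = ∑ i, w i := by
  rw [cyclicIntervalSum, ← Fin.sum_univ_eq_sum_range]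
  exact sum_congr rfl fun i _ => by simp [Nat.mod_eq_of_lt i.isLt]

theorem cyclicIntervalSum_add_compl {l : ℕ} (hl : l ≤ r) :
    cyclicIntervalSum hr w 0 l + cyclicIntervalSum hr w l (r - l) = ∑ i, w i := by
  have := cyclicIntervalSum_add hr w 0 l (r - l)
  rwa [Nat.add_sub_cancel' hl, zero_add, cyclicIntervalSum_zero_self, eq_comm] at this

end CyclicInterval

/-- If positive reals `w₁, …, w_r` (read cyclically) sum to `n` and each is
less than `n/2`, then some nonempty cyclic interval of them has sum between `n/3` and `n/2`.
A cyclic interval is given by a starting index `a` and a length `l` with `1 ≤ l ≤ r`, the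
indices being taken modulo `r`. -/
theorem stmt5 (r : ℕ) (hr : 0 < r) (w : Fin r → ℝ) (n : ℝ)
    (hpos : ∀ i, 0 < w i) (hsum : ∑ i, w i = n)
    (hmax : ∀ i, w i < n / 2) :
    ∃ a l : ℕ, 1 ≤ l ∧ l ≤ r ∧
      n / 3 ≤ ∑ t ∈ Finset.range l, w ⟨(a + t) % r, Nat.mod_lt _ hr⟩ ∧
      ∑ t ∈ Finset.range l, w ⟨(a + t) % r, Nat.mod_lt _ hr⟩ ≤ n / 2 := by
  show ∃ a l, 1 ≤ l ∧ l ≤ r ∧ n / 3 ≤ cyclicIntervalSum hr w a l ∧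
    cyclicIntervalSum hr w a l ≤ n / 2
  have hn : 0 < n := hsum ▸ sum_pos (fun i _ => hpos i) ⟨⟨0, hr⟩, mem_univ _⟩
  by_cases hbig : ∃ i, n / 3 ≤ w i
  · obtain ⟨i, hi⟩ := hbig
    refine ⟨i, 1, le_rfl, hr, ?_, ?_⟩ <;> rw [cyclicIntervalSum_one]
    exacts [hi, (hmax i).le]
  push Not at hbig
  have hfull : n / 3 ≤ cyclicIntervalSum hr w 0 r := by
    rw [cyclicIntervalSum_zero_self, hsum]; linarith
  obtain ⟨l, hl1, hlr, hlow, hhigh⟩ : ∃ l, 1 ≤ l ∧ l ≤ r ∧ n / 3 ≤ cyclicIntervalSum hr w 0 l ∧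
      cyclicIntervalSum hr w 0 l < n / 3 + n / 3 :=
    exists_le_sum_range_lt_add (fun k _ => hbig _) (by positivity) hfull
  have hcompl := cyclicIntervalSum_add_compl hr w hlr
  rw [hsum] at hcompl
  rcases le_or_gt (cyclicIntervalSum hr w 0 l) (n / 2) with hle | hgt
  · exact ⟨0, l, hl1, hlr, hlow, hle⟩
  · have hltr : l < r := hlr.lt_of_ne <| by
      rintro rfl
      rw [cyclicIntervalSum_zero_self, hsum] at hhigh
      linarith
    exact ⟨l, r - l, by omega, by omega, by linarith, by linarith⟩
end

section
/- Let d ≥ 2 and k ≥ 1 be integers, and let G be an n-vertex connected d-regular graph containing two edges u₀u₁ and v₀v₁ with dist_G(u₀u₁, v₀v₁) ≥ 2k + 2. Then (√(d−1) + 1)² · λ₂(G) ≤ (√(d−1) − 1)² · λ_n(G) + 4(d−1)^{3/2}/(k+1). -/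
/-!
Write `s = √(d-1)`. For an edge `e` let `ρ w` be the distance from `w` to the nearer endpoint
of `e`, and take the test function `F w = s^(-ρ w)` on the ball `ρ ≤ k` (zero outside) together
with its alternating twin `F̂ = (-1)^ρ F`. Along an edge `ρ` changes by at most one, and the ratio
`1/s` makes `(s+1)² (F w - F w')² = (s-1)² (F̂ w - F̂ w')²` on every edge except those leaving
the ball. Each vertex has at most `d-1` neighbours one level further out, so there are at most
`(d-1) |S_k|` such edges and the spheres `S_j` grow by at most a factor `d-1`; hence the defect is
at most `8 s³ ‖F‖² / (k+1)`.

The test functions of two edges at distance `≥ 2k+2` have supports at distance `≥ 2`, so with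
`α = Σ F_f` and `β = Σ F_e` the vectors `x = α F_e - β F_f` (orthogonal to constants) and
`y = α F̂_e + β F̂_f` have the same norm and their energies split. Bounding `λ₂` by the Rayleigh
quotient of `x` and `λₙ` by that of `y` gives the inequality.
-/

open Matrix SimpleGraph

attribute [local instance] Classical.propDecidable

/-- Eigenvalues of a real square matrix, sorted in non-decreasing order
(junk value `0` if the matrix is not Hermitian). -/
noncomputable def sortedEigs {n : ℕ} (A : Matrix (Fin n) (Fin n) ℝ) : Fin n → ℝ :=
  if h : A.IsHermitian then h.eigenvalues ∘ Tuple.sort h.eigenvalues else 0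

/-- `lapEig G i` is the `i`-th smallest Laplacian eigenvalue of `G` (1-based indexing),
so `lapEig G 2 = λ₂(G)` and `lapEig G n = λₙ(G)`; junk value `0` if `i` is out of range. -/
noncomputable def lapEig {n : ℕ} (G : SimpleGraph (Fin n)) (i : ℕ) : ℝ :=
  if h : i - 1 < n then sortedEigs (G.lapMatrix ℝ) ⟨i - 1, h⟩ else 0

/-- `adjEig G i` is the `i`-th largest adjacency eigenvalue of `G` (1-based indexing),
so `adjEig G 1 = μ₁(G)` and `adjEig G n = μₙ(G)`; junk value `0` if `i` is out of range. -/
noncomputable def adjEig {n : ℕ} (G : SimpleGraph (Fin n)) (i : ℕ) : ℝ :=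
  if h : n - i < n then sortedEigs (G.adjMatrix ℝ) ⟨n - i, h⟩ else 0

section Spectral

variable {ι : Type*} [Fintype ι]

lemma OrthonormalBasis.dotProduct_eq_sum_mul (b : OrthonormalBasis ι ℝ (EuclideanSpace ℝ ι))
    (x y : ι → ℝ) : x ⬝ᵥ y = ∑ i, (b i ⬝ᵥ x) * (b i ⬝ᵥ y) := by
  have h := b.sum_inner_mul_inner (WithLp.toLp 2 x) (WithLp.toLp 2 y)
  simp only [EuclideanSpace.inner_eq_star_dotProduct, star_trivial] at h
  rw [dotProduct_comm x y, ← h]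
  exact Finset.sum_congr rfl fun i _ => by rw [dotProduct_comm y]

lemma Matrix.IsHermitian.dotProduct_mulVec_eq_sum [DecidableEq ι] {A : Matrix ι ι ℝ}
    (hA : A.IsHermitian) (x : ι → ℝ) :
    x ⬝ᵥ (A *ᵥ x) = ∑ i, hA.eigenvalues i * (hA.eigenvectorBasis i ⬝ᵥ x) ^ 2 := by
  rw [hA.eigenvectorBasis.dotProduct_eq_sum_mul]
  refine Finset.sum_congr rfl fun i _ => ?_
  have hsymm : ⇑(hA.eigenvectorBasis i) ⬝ᵥ (A *ᵥ x) = (A *ᵥ hA.eigenvectorBasis i) ⬝ᵥ x := by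
    rw [dotProduct_mulVec, ← mulVec_transpose, ← conjTranspose_eq_transpose_of_trivial, hA.eq]
  rw [hsymm, hA.mulVec_eigenvectorBasis, smul_dotProduct, smul_eq_mul]
  ring

lemma Matrix.IsHermitian.dotProduct_self_eq_sum [DecidableEq ι] {A : Matrix ι ι ℝ}
    (hA : A.IsHermitian) (x : ι → ℝ) :
    x ⬝ᵥ x = ∑ i, (hA.eigenvectorBasis i ⬝ᵥ x) ^ 2 := by
  simp only [hA.eigenvectorBasis.dotProduct_eq_sum_mul x x, sq]

end Spectral

section SortedEigenvalues

variable {n : ℕ} {A : Matrix (Fin n) (Fin n) ℝ}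

lemma sortedEigs_eq (hA : A.IsHermitian) (j : Fin n) :
    sortedEigs A j = hA.eigenvalues (Tuple.sort hA.eigenvalues j) := by
  simp only [sortedEigs, dif_pos hA, Function.comp_apply]

lemma sortedEigs_monotone (hA : A.IsHermitian) : Monotone (sortedEigs A) := by
  intro i j hij
  rw [sortedEigs_eq hA, sortedEigs_eq hA]
  exact Tuple.monotone_sort hA.eigenvalues hij

lemma dotProduct_mulVec_le_sortedEigs_last (hA : A.IsHermitian) (h : n - 1 < n) (x : Fin n → ℝ) :
    x ⬝ᵥ (A *ᵥ x) ≤ sortedEigs A ⟨n - 1, h⟩ * (x ⬝ᵥ x) := by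
  rw [hA.dotProduct_mulVec_eq_sum, hA.dotProduct_self_eq_sum, Finset.mul_sum]
  refine Finset.sum_le_sum fun i _ => mul_le_mul_of_nonneg_right ?_ (sq_nonneg _)
  have hi : hA.eigenvalues i = sortedEigs A ((Tuple.sort hA.eigenvalues).symm i) := by
    rw [sortedEigs_eq hA, Equiv.apply_symm_apply]
  rw [hi]
  exact sortedEigs_monotone hA (Fin.le_def.mpr (Nat.le_sub_one_of_lt (Fin.is_lt _)))

lemma sortedEigs_mul_le_of_orthogonal (hA : A.IsHermitian) (j : Fin n) (x : Fin n → ℝ)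
    (hx : ∀ i < j, hA.eigenvectorBasis (Tuple.sort hA.eigenvalues i) ⬝ᵥ x = 0) :
    sortedEigs A j * (x ⬝ᵥ x) ≤ x ⬝ᵥ (A *ᵥ x) := by
  set σ := Tuple.sort hA.eigenvalues
  set c : Fin n → ℝ := fun i => (hA.eigenvectorBasis i ⬝ᵥ x) ^ 2
  calc sortedEigs A j * (x ⬝ᵥ x) = ∑ i, sortedEigs A j * c (σ i) := by
        rw [hA.dotProduct_self_eq_sum, Finset.mul_sum]
        exact (Equiv.sum_comp σ fun i => sortedEigs A j * c i).symm
    _ ≤ ∑ i, hA.eigenvalues (σ i) * c (σ i) := by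
        refine Finset.sum_le_sum fun i _ => ?_
        rcases lt_or_ge i j with hij | hji
        · simp [c, hx i hij]
        · rw [← sortedEigs_eq hA]
          exact mul_le_mul_of_nonneg_right (sortedEigs_monotone hA hji) (sq_nonneg _)
    _ = x ⬝ᵥ (A *ᵥ x) := by
        rw [hA.dotProduct_mulVec_eq_sum]
        exact Equiv.sum_comp σ fun i => hA.eigenvalues i * c i

end SortedEigenvalues

section Laplacian

variable {V : Type*} [Fintype V]

noncomputable def dirichletEnergy (G : SimpleGraph V) (f : V → ℝ) : ℝ :=
  ∑ v, ∑ w, if G.Adj v w then (f v - f w) ^ 2 else 0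

lemma dotProduct_lapMatrix_mulVec [DecidableEq V] (G : SimpleGraph V) (x : V → ℝ) :
    x ⬝ᵥ (G.lapMatrix ℝ *ᵥ x) = dirichletEnergy G x / 2 := by
  rw [← toLinearMap₂'_apply', lapMatrix_toLinearMap₂']
  rfl

variable {n : ℕ} {G : SimpleGraph (Fin n)}

lemma dotProduct_lapMatrix_mulVec_le_lapEig (x : Fin n → ℝ) :
    x ⬝ᵥ (G.lapMatrix ℝ *ᵥ x) ≤ lapEig G n * (x ⬝ᵥ x) := by
  rcases Nat.eq_zero_or_pos n with rfl | hn
  · simp [dotProduct]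
  have h : n - 1 < n := by omega
  rw [lapEig, dif_pos h]
  exact dotProduct_mulVec_le_sortedEigs_last (isHermitian_lapMatrix ℝ G) h x

/-- The eigenvector of the smallest Laplacian eigenvalue `0` of a connected graph is constant,
so a mean-zero vector is orthogonal to it. -/
lemma lapEig_two_mul_le (hconn : G.Connected) (hn : 1 < n) (x : Fin n → ℝ)
    (hx : ∑ i, x i = 0) : lapEig G 2 * (x ⬝ᵥ x) ≤ x ⬝ᵥ (G.lapMatrix ℝ *ᵥ x) := by
  have hL := isHermitian_lapMatrix ℝ G
  set σ := Tuple.sort hL.eigenvalues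
  set i₀ : Fin n := ⟨0, by omega⟩
  have hmin : hL.eigenvalues (σ i₀) = 0 := by
    refine le_antisymm ?_ ((posSemidef_lapMatrix ℝ G).eigenvalues_nonneg _)
    have h := sortedEigs_mul_le_of_orthogonal hL i₀ (fun _ => 1)
      fun i hi => absurd (Fin.lt_def.mp hi) (Nat.not_lt_zero _)
    rw [G.lapMatrix_mulVec_const_eq_zero, dotProduct_zero, sortedEigs_eq hL] at h
    have hpos : (0 : ℝ) < (fun _ : Fin n => (1 : ℝ)) ⬝ᵥ (fun _ => 1) := by
      simp only [dotProduct, mul_one, Finset.sum_const, Finset.card_univ, Fintype.card_fin,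
        nsmul_eq_mul]
      positivity
    exact nonpos_of_mul_nonpos_left h hpos
  set v : Fin n → ℝ := WithLp.ofLp (hL.eigenvectorBasis (σ i₀))
  have hv : G.lapMatrix ℝ *ᵥ v = 0 := by
    rw [hL.mulVec_eigenvectorBasis, hmin, zero_smul]
  have hconst : ∀ w, v w = v i₀ :=
    fun w => G.lapMatrix_mulVec_eq_zero_iff_forall_reachable.mp hv w i₀ (hconn.preconnected w i₀)
  have hvx : v ⬝ᵥ x = 0 := by
    simp only [dotProduct, hconst, ← Finset.mul_sum, hx, mul_zero]
  have h := sortedEigs_mul_le_of_orthogonal hL ⟨1, hn⟩ x fun i hi => by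
    rwa [show i = i₀ from Fin.ext (by simpa [Fin.lt_def] using hi)]
  rwa [lapEig, dif_pos (by omega)]

lemma dotProduct_self_eq_sum_sq (x : Fin n → ℝ) : x ⬝ᵥ x = ∑ i, x i ^ 2 := by
  simp only [dotProduct, sq]

lemma lapEig_bound_of_test_pair (hconn : G.Connected) (hn : 1 < n) {s c : ℝ} {x y : Fin n → ℝ}
    (hx : ∑ i, x i = 0) (hxpos : 0 < ∑ i, x i ^ 2) (hyx : ∑ i, y i ^ 2 = ∑ i, x i ^ 2)
    (hxy : (s + 1) ^ 2 * dirichletEnergy G x ≤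
      (s - 1) ^ 2 * dirichletEnergy G y + 2 * c * ∑ i, x i ^ 2) :
    (s + 1) ^ 2 * lapEig G 2 ≤ (s - 1) ^ 2 * lapEig G n + c := by
  have hlow := lapEig_two_mul_le hconn hn x hx
  have hhigh := dotProduct_lapMatrix_mulVec_le_lapEig (G := G) y
  rw [dotProduct_lapMatrix_mulVec, dotProduct_self_eq_sum_sq] at hlow hhigh
  rw [hyx] at hhigh
  have h₁ := mul_le_mul_of_nonneg_left hlow (sq_nonneg (s + 1))
  have h₂ := mul_le_mul_of_nonneg_left hhigh (sq_nonneg (s - 1))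
  refine le_of_mul_le_mul_right ?_ hxpos
  linear_combination h₁ + hxy / 2 + h₂

end Laplacian

section EdgeShells

variable {V : Type*} {G : SimpleGraph V} {u₀ u₁ : V}

noncomputable def distToEdge (G : SimpleGraph V) (u₀ u₁ w : V) : ℕ :=
  min (G.dist u₀ w) (G.dist u₁ w)

@[simp]
lemma distToEdge_left : distToEdge G u₀ u₁ u₀ = 0 := by
  simp [distToEdge]

@[simp]
lemma distToEdge_right : distToEdge G u₀ u₁ u₁ = 0 := by
  simp [distToEdge]

lemma exists_dist_eq_distToEdge (u₀ u₁ w : V) :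
    ∃ u, (u = u₀ ∨ u = u₁) ∧ G.dist u w = distToEdge G u₀ u₁ w := by
  rcases min_choice (G.dist u₀ w) (G.dist u₁ w) with h | h
  exacts [⟨u₀, .inl rfl, h.symm⟩, ⟨u₁, .inr rfl, h.symm⟩]

lemma SimpleGraph.Connected.exists_adj_dist_add_one (hconn : G.Connected) {u w : V}
    (h : G.dist u w ≠ 0) : ∃ w', G.Adj w w' ∧ G.dist u w' + 1 = G.dist u w := by
  obtain ⟨p, hp⟩ := hconn.exists_walk_length_eq_dist w u
  cases p with
  | nil => simp at h
  | @cons _ w' _ hadj q =>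
    refine ⟨w', hadj, le_antisymm ?_ ?_⟩
    · rw [dist_comm (u := u), dist_comm (u := u), ← hp, Walk.length_cons]
      exact Nat.add_le_add_right (dist_le q) 1
    · have := hconn.dist_triangle (u := u) (v := w') (w := w)
      have : G.dist w' w = 1 := dist_eq_one_iff_adj.mpr hadj.symm
      omega

lemma SimpleGraph.Adj.distToEdge_le (hconn : G.Connected) {w w' : V} (hadj : G.Adj w w') :
    distToEdge G u₀ u₁ w' ≤ distToEdge G u₀ u₁ w + 1 := by
  have hww' : G.dist w w' = 1 := dist_eq_one_iff_adj.mpr hadj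
  have h₀ := hconn.dist_triangle (u := u₀) (v := w) (w := w')
  have h₁ := hconn.dist_triangle (u := u₁) (v := w) (w := w')
  simp only [distToEdge]
  omega

lemma exists_adj_distToEdge_add_one (hconn : G.Connected) {w : V}
    (h : distToEdge G u₀ u₁ w ≠ 0) :
    ∃ w', G.Adj w w' ∧ distToEdge G u₀ u₁ w' + 1 = distToEdge G u₀ u₁ w := by
  obtain ⟨u, hu, hmin⟩ := exists_dist_eq_distToEdge (G := G) u₀ u₁ w
  obtain ⟨w', hadj, hw'⟩ := hconn.exists_adj_dist_add_one (hmin ▸ h)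
  have hle : distToEdge G u₀ u₁ w' ≤ G.dist u w' := by
    rcases hu with rfl | rfl
    exacts [min_le_left _ _, min_le_right _ _]
  have hge := hadj.symm.distToEdge_le (u₀ := u₀) (u₁ := u₁) hconn
  exact ⟨w', hadj, by omega⟩

/-- Every vertex has a neighbour that is not one step further from the edge: its predecessor on
a shortest path to the edge, or the other endpoint if it is an endpoint itself. -/
lemma exists_adj_distToEdge_ne_succ (hconn : G.Connected) (he : G.Adj u₀ u₁) (w : V) :
    ∃ w', G.Adj w w' ∧ distToEdge G u₀ u₁ w' ≠ distToEdge G u₀ u₁ w + 1 := by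
  by_cases h : distToEdge G u₀ u₁ w = 0
  · rcases Nat.min_eq_zero_iff.mp h with h | h <;> rw [hconn.dist_eq_zero_iff] at h <;> subst h
    exacts [⟨u₁, he, by simp⟩, ⟨u₀, he.symm, by simp⟩]
  · obtain ⟨w', hadj, hw'⟩ := exists_adj_distToEdge_add_one hconn h
    exact ⟨w', hadj, by omega⟩

variable [Fintype V]

noncomputable def shell (G : SimpleGraph V) (u₀ u₁ : V) (j : ℕ) : Finset V :=
  Finset.univ.filter fun w => distToEdge G u₀ u₁ w = j

noncomputable def upNeighbors (G : SimpleGraph V) (u₀ u₁ w : V) : Finset V :=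
  (G.neighborFinset w).filter fun w' => distToEdge G u₀ u₁ w' = distToEdge G u₀ u₁ w + 1

@[simp]
lemma mem_shell {j : ℕ} {w : V} : w ∈ shell G u₀ u₁ j ↔ distToEdge G u₀ u₁ w = j := by
  simp [shell]

lemma card_upNeighbors_lt_degree (hconn : G.Connected) (he : G.Adj u₀ u₁) (w : V) :
    (upNeighbors G u₀ u₁ w).card < G.degree w := by
  rw [← card_neighborFinset_eq_degree]
  refine Finset.card_lt_card (Finset.filter_ssubset.mpr ?_)
  obtain ⟨w', hadj, hw'⟩ := exists_adj_distToEdge_ne_succ hconn he w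
  exact ⟨w', (mem_neighborFinset G w w').mpr hadj, hw'⟩

lemma shell_succ_subset_biUnion (hconn : G.Connected) (j : ℕ) :
    shell G u₀ u₁ (j + 1) ⊆ (shell G u₀ u₁ j).biUnion (upNeighbors G u₀ u₁) := by
  intro w' hw'
  rw [mem_shell] at hw'
  obtain ⟨w, hadj, hw⟩ := exists_adj_distToEdge_add_one (u₀ := u₀) (u₁ := u₁) hconn (w := w')
    (by omega)
  refine Finset.mem_biUnion.mpr ⟨w, mem_shell.mpr (by omega), ?_⟩
  simp only [upNeighbors, Finset.mem_filter, mem_neighborFinset]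
  exact ⟨hadj.symm, by omega⟩

lemma card_shell_succ_le {d : ℕ} (hconn : G.Connected) (hdeg : ∀ w, G.degree w ≤ d)
    (he : G.Adj u₀ u₁) (j : ℕ) :
    (shell G u₀ u₁ (j + 1)).card ≤ (d - 1) * (shell G u₀ u₁ j).card := by
  calc (shell G u₀ u₁ (j + 1)).card
      ≤ ((shell G u₀ u₁ j).biUnion (upNeighbors G u₀ u₁)).card :=
        Finset.card_le_card (shell_succ_subset_biUnion hconn j)
    _ ≤ ∑ w ∈ shell G u₀ u₁ j, (upNeighbors G u₀ u₁ w).card := Finset.card_biUnion_le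
    _ ≤ ∑ _w ∈ shell G u₀ u₁ j, (d - 1) := Finset.sum_le_sum fun w _ => by
        have := card_upNeighbors_lt_degree hconn he w
        have := hdeg w
        omega
    _ = (d - 1) * (shell G u₀ u₁ j).card := by rw [Finset.sum_const, smul_eq_mul, mul_comm]

lemma card_shell_add_le {d : ℕ} (hconn : G.Connected) (hdeg : ∀ w, G.degree w ≤ d)
    (he : G.Adj u₀ u₁) (j m : ℕ) :
    (shell G u₀ u₁ (j + m)).card ≤ (d - 1) ^ m * (shell G u₀ u₁ j).card := by
  induction m with
  | zero => simp
  | succ m ih =>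
    calc (shell G u₀ u₁ (j + m + 1)).card ≤ (d - 1) * (shell G u₀ u₁ (j + m)).card :=
          card_shell_succ_le hconn hdeg he _
      _ ≤ (d - 1) * ((d - 1) ^ m * (shell G u₀ u₁ j).card) := Nat.mul_le_mul_left _ ih
      _ = (d - 1) ^ (m + 1) * (shell G u₀ u₁ j).card := by ring

end EdgeShells

section TestFunctions

noncomputable def decayProfile (k : ℕ) (r : ℝ) (a : ℕ) : ℝ := if a ≤ k then r ^ a else 0

lemma decayProfile_of_lt {k a : ℕ} (r : ℝ) (h : k < a) : decayProfile k r a = 0 :=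
  if_neg (Nat.not_le_of_lt h)

lemma decayProfile_zero (k : ℕ) (r : ℝ) : decayProfile k r 0 = 1 := by
  simp [decayProfile]

lemma decayProfile_nonneg (k : ℕ) {r : ℝ} (hr : 0 ≤ r) (a : ℕ) : 0 ≤ decayProfile k r a := by
  unfold decayProfile
  split_ifs
  exacts [pow_nonneg hr a, le_rfl]

noncomputable def altProfile (k : ℕ) (r : ℝ) (a : ℕ) : ℝ := (-1) ^ a * decayProfile k r a

lemma altProfile_sq (k : ℕ) (r : ℝ) (a : ℕ) : altProfile k r a ^ 2 = decayProfile k r a ^ 2 := by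
  rw [altProfile, mul_pow, ← pow_mul, mul_comm a, pow_mul, neg_one_sq, one_pow, one_mul]

/-- The ratio `s⁻¹` is chosen so that `(s + 1) (1 - s⁻¹) = (s - 1) (1 + s⁻¹)`: the two sides agree
on every step inside the ball, and only the step leaving it costs `4 s (s⁻¹ ^ k) ^ 2`. -/
lemma decayProfile_step {s : ℝ} (hs : s ≠ 0) (k a : ℕ) :
    (s + 1) ^ 2 * (decayProfile k s⁻¹ a - decayProfile k s⁻¹ (a + 1)) ^ 2 =
      (s - 1) ^ 2 * (altProfile k s⁻¹ a - altProfile k s⁻¹ (a + 1)) ^ 2 +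
        if a = k then 4 * s * (s⁻¹ ^ k) ^ 2 else 0 := by
  have hsign : (altProfile k s⁻¹ a - altProfile k s⁻¹ (a + 1)) ^ 2 =
      (decayProfile k s⁻¹ a + decayProfile k s⁻¹ (a + 1)) ^ 2 := by
    have h1 : ((-1 : ℝ) ^ a) ^ 2 = 1 := by rw [← pow_mul, mul_comm, pow_mul, neg_one_sq, one_pow]
    rw [altProfile, altProfile, pow_succ]
    linear_combination (decayProfile k s⁻¹ a + decayProfile k s⁻¹ (a + 1)) ^ 2 * h1
  rw [hsign]
  rcases lt_trichotomy a k with h | rfl | h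
  · simp only [decayProfile, if_pos h.le, if_pos (Nat.succ_le_of_lt h), if_neg h.ne, add_zero,
      pow_succ]
    field_simp
  · simp only [decayProfile, le_refl, if_true, Nat.not_succ_le_self, if_false]
    ring
  · simp only [decayProfile_of_lt _ h, decayProfile_of_lt _ (Nat.lt_succ_of_lt h), if_neg h.ne']
    ring

lemma decayProfile_adj_le {s : ℝ} (hs : 0 < s) (k : ℕ) {a b : ℕ} (hab : a ≤ b + 1)
    (hba : b ≤ a + 1) :
    (s + 1) ^ 2 * (decayProfile k s⁻¹ a - decayProfile k s⁻¹ b) ^ 2 ≤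
      (s - 1) ^ 2 * (altProfile k s⁻¹ a - altProfile k s⁻¹ b) ^ 2 +
        4 * s * (s⁻¹ ^ k) ^ 2 * ((if a = k ∧ b = k + 1 then 1 else 0) +
          (if b = k ∧ a = k + 1 then 1 else 0)) := by
  have hc : 0 ≤ 4 * s * (s⁻¹ ^ k) ^ 2 := by positivity
  rcases (show b = a ∨ b = a + 1 ∨ a = b + 1 by omega) with rfl | rfl | rfl
  · simp only [sub_self]
    split_ifs <;> nlinarith
  · have h := decayProfile_step hs.ne' k a
    split_ifs at h ⊢ <;> first | omega | linarith
  · have h := decayProfile_step hs.ne' k b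
    rw [← neg_sub, neg_sq, ← neg_sub (altProfile k s⁻¹ b), neg_sq]
    split_ifs at h ⊢ <;> first | omega | linarith

end TestFunctions

section OneEdge

variable {V : Type*} {G : SimpleGraph V} {u₀ u₁ : V}

noncomputable def edgeTest (G : SimpleGraph V) (u₀ u₁ : V) (k : ℕ) (r : ℝ) (w : V) : ℝ :=
  decayProfile k r (distToEdge G u₀ u₁ w)

noncomputable def altEdgeTest (G : SimpleGraph V) (u₀ u₁ : V) (k : ℕ) (r : ℝ) (w : V) : ℝ :=
  altProfile k r (distToEdge G u₀ u₁ w)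

@[simp]
lemma edgeTest_left {k : ℕ} {r : ℝ} : edgeTest G u₀ u₁ k r u₀ = 1 := by
  simp [edgeTest, decayProfile_zero]

variable [Fintype V] {d : ℕ}

lemma sum_boundary_le (hconn : G.Connected) (hdeg : ∀ w, G.degree w ≤ d) (he : G.Adj u₀ u₁)
    (k : ℕ) :
    (∑ w, ∑ w', if G.Adj w w' ∧ distToEdge G u₀ u₁ w = k ∧ distToEdge G u₀ u₁ w' = k + 1
      then (1 : ℝ) else 0) ≤ ((d - 1 : ℕ) : ℝ) * (shell G u₀ u₁ k).card := by
  calc _ = ∑ w ∈ shell G u₀ u₁ k, ((upNeighbors G u₀ u₁ w).card : ℝ) := by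
        rw [shell, Finset.sum_filter]
        refine Finset.sum_congr rfl fun w _ => ?_
        split_ifs with hw
        · rw [Finset.sum_boole, upNeighbors, neighborFinset_eq_filter, Finset.filter_filter]
          simp only [hw, true_and]
        · simp [hw]
    _ ≤ ∑ _w ∈ shell G u₀ u₁ k, ((d - 1 : ℕ) : ℝ) := Finset.sum_le_sum fun w _ => by
        have := card_upNeighbors_lt_degree hconn he w
        have := hdeg w
        exact_mod_cast (by omega : (upNeighbors G u₀ u₁ w).card ≤ d - 1)
    _ = _ := by rw [Finset.sum_const, nsmul_eq_mul, mul_comm]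

lemma dirichletEnergy_edgeTest_le_boundary (hconn : G.Connected) (hdeg : ∀ w, G.degree w ≤ d)
    (he : G.Adj u₀ u₁) {s : ℝ} (hs : 0 < s) (k : ℕ) :
    (s + 1) ^ 2 * dirichletEnergy G (edgeTest G u₀ u₁ k s⁻¹) ≤
      (s - 1) ^ 2 * dirichletEnergy G (altEdgeTest G u₀ u₁ k s⁻¹) +
        8 * s * (s⁻¹ ^ k) ^ 2 * (((d - 1 : ℕ) : ℝ) * (shell G u₀ u₁ k).card) := by
  set c := 4 * s * (s⁻¹ ^ k) ^ 2
  set χ : V → V → ℝ := fun w w' =>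
    if G.Adj w w' ∧ distToEdge G u₀ u₁ w = k ∧ distToEdge G u₀ u₁ w' = k + 1 then 1 else 0
  have hpt : ∀ w w', (s + 1) ^ 2 * (if G.Adj w w' then
        (edgeTest G u₀ u₁ k s⁻¹ w - edgeTest G u₀ u₁ k s⁻¹ w') ^ 2 else 0) ≤
      (s - 1) ^ 2 * (if G.Adj w w' then
        (altEdgeTest G u₀ u₁ k s⁻¹ w - altEdgeTest G u₀ u₁ k s⁻¹ w') ^ 2 else 0) +
      c * (χ w w' + χ w' w) := by
    intro w w'
    by_cases hadj : G.Adj w w'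
    · simp only [χ, hadj, hadj.symm, true_and, if_true]
      exact decayProfile_adj_le hs k (hadj.symm.distToEdge_le hconn) (hadj.distToEdge_le hconn)
    · have hadj' : ¬G.Adj w' w := fun h => hadj h.symm
      simp [χ, hadj, hadj']
  have hswap : ∑ w, ∑ w', χ w' w = ∑ w, ∑ w', χ w w' := Finset.sum_comm
  have hχ : ∑ w, ∑ w', χ w w' ≤ ((d - 1 : ℕ) : ℝ) * (shell G u₀ u₁ k).card :=
    sum_boundary_le hconn hdeg he k
  calc (s + 1) ^ 2 * dirichletEnergy G (edgeTest G u₀ u₁ k s⁻¹)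
      ≤ ∑ w, ∑ w', ((s - 1) ^ 2 * (if G.Adj w w' then
          (altEdgeTest G u₀ u₁ k s⁻¹ w - altEdgeTest G u₀ u₁ k s⁻¹ w') ^ 2 else 0) +
          c * (χ w w' + χ w' w)) := by
        simp only [dirichletEnergy, Finset.mul_sum]
        exact Finset.sum_le_sum fun w _ => Finset.sum_le_sum fun w' _ => hpt w w'
    _ = (s - 1) ^ 2 * dirichletEnergy G (altEdgeTest G u₀ u₁ k s⁻¹) +
          c * (∑ w, ∑ w', χ w w' + ∑ w, ∑ w', χ w' w) := by
        simp only [dirichletEnergy, Finset.sum_add_distrib, Finset.mul_sum, mul_add]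
    _ ≤ _ := by
        rw [hswap]
        have hc : 0 ≤ c := by positivity
        nlinarith

lemma card_shell_mul_le_sum_sq (hconn : G.Connected) (hdeg : ∀ w, G.degree w ≤ d)
    (he : G.Adj u₀ u₁) {r : ℝ} (hr : ((d - 1 : ℕ) : ℝ) * r ^ 2 = 1) (k : ℕ) :
    ((k : ℝ) + 1) * ((shell G u₀ u₁ k).card * (r ^ k) ^ 2) ≤ ∑ w, edgeTest G u₀ u₁ k r w ^ 2 := by
  have hshell : ∀ i ∈ Finset.range (k + 1), ((shell G u₀ u₁ k).card : ℝ) * (r ^ k) ^ 2 ≤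
      ∑ w ∈ shell G u₀ u₁ i, edgeTest G u₀ u₁ k r w ^ 2 := by
    intro i hi
    have hik : i ≤ k := Nat.lt_succ_iff.mp (Finset.mem_range.mp hi)
    have hsum : ∑ w ∈ shell G u₀ u₁ i, edgeTest G u₀ u₁ k r w ^ 2 =
        (shell G u₀ u₁ i).card * (r ^ i) ^ 2 := by
      rw [Finset.sum_congr rfl fun w hw => by
        rw [edgeTest, mem_shell.mp hw, decayProfile, if_pos hik], Finset.sum_const, nsmul_eq_mul]
    have hcard : ((shell G u₀ u₁ k).card : ℝ) ≤
        ((d - 1 : ℕ) : ℝ) ^ (k - i) * (shell G u₀ u₁ i).card := by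
      exact_mod_cast Nat.add_sub_of_le hik ▸ card_shell_add_le hconn hdeg he i (k - i)
    calc ((shell G u₀ u₁ k).card : ℝ) * (r ^ k) ^ 2
        ≤ ((d - 1 : ℕ) : ℝ) ^ (k - i) * (shell G u₀ u₁ i).card * (r ^ k) ^ 2 := by gcongr
      _ = (shell G u₀ u₁ i).card * (r ^ i) ^ 2 * (((d - 1 : ℕ) : ℝ) * r ^ 2) ^ (k - i) := by
        rw [← Nat.add_sub_of_le hik]
        simp only [Nat.add_sub_cancel_left]
        ring
      _ = _ := by rw [hr, one_pow, mul_one, hsum]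
  calc ((k : ℝ) + 1) * ((shell G u₀ u₁ k).card * (r ^ k) ^ 2)
      = ∑ _i ∈ Finset.range (k + 1), ((shell G u₀ u₁ k).card : ℝ) * (r ^ k) ^ 2 := by
        rw [Finset.sum_const, Finset.card_range, nsmul_eq_mul]
        push_cast
        ring
    _ ≤ ∑ i ∈ Finset.range (k + 1), ∑ w ∈ shell G u₀ u₁ i, edgeTest G u₀ u₁ k r w ^ 2 :=
        Finset.sum_le_sum hshell
    _ ≤ ∑ w, edgeTest G u₀ u₁ k r w ^ 2 :=
        Finset.sum_fiberwise_le_sum_of_sum_fiber_nonneg fun _ _ =>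
          Finset.sum_nonneg fun _ _ => sq_nonneg _

theorem dirichletEnergy_edgeTest_le (hconn : G.Connected) (hdeg : ∀ w, G.degree w ≤ d)
    (he : G.Adj u₀ u₁) {s : ℝ} (hs : 0 < s) (hsd : s ^ 2 = (d : ℝ) - 1) (k : ℕ) :
    (s + 1) ^ 2 * dirichletEnergy G (edgeTest G u₀ u₁ k s⁻¹) ≤
      (s - 1) ^ 2 * dirichletEnergy G (altEdgeTest G u₀ u₁ k s⁻¹) +
        8 * s ^ 3 / ((k : ℝ) + 1) * ∑ w, edgeTest G u₀ u₁ k s⁻¹ w ^ 2 := by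
  have hd : ((d - 1 : ℕ) : ℝ) = s ^ 2 := by
    have : 1 ≤ d := by exact_mod_cast (show (1 : ℝ) ≤ d by nlinarith)
    rw [Nat.cast_sub this, Nat.cast_one, hsd]
  have hr : ((d - 1 : ℕ) : ℝ) * s⁻¹ ^ 2 = 1 := by
    rw [hd]
    field_simp
  have hboundary := dirichletEnergy_edgeTest_le_boundary hconn hdeg he hs k
  have hmass := card_shell_mul_le_sum_sq hconn hdeg he hr k
  calc (s + 1) ^ 2 * dirichletEnergy G (edgeTest G u₀ u₁ k s⁻¹)
      ≤ (s - 1) ^ 2 * dirichletEnergy G (altEdgeTest G u₀ u₁ k s⁻¹) +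
          8 * s ^ 3 / ((k : ℝ) + 1) *
            (((k : ℝ) + 1) * ((shell G u₀ u₁ k).card * (s⁻¹ ^ k) ^ 2)) := by
        convert hboundary using 2
        rw [hd]
        field_simp
    _ ≤ _ := by gcongr

end OneEdge

section TwoEdges

variable {V : Type*} {G : SimpleGraph V}

def Separated (G : SimpleGraph V) (f g : V → ℝ) : Prop :=
  ∀ w w', (w = w' ∨ G.Adj w w') → f w * g w' = 0

namespace Separated

variable {f g : V → ℝ}

lemma mul_left (h : Separated G f g) (φ ψ : V → ℝ) :
    Separated G (fun w => φ w * f w) (fun w => ψ w * g w) :=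
  fun w w' hw => by rw [mul_mul_mul_comm, h w w' hw, mul_zero]

variable [Fintype V]

lemma sum_sq_add (h : Separated G f g) (a b : ℝ) :
    ∑ w, (a * f w + b * g w) ^ 2 = a ^ 2 * ∑ w, f w ^ 2 + b ^ 2 * ∑ w, g w ^ 2 := by
  simp only [Finset.mul_sum, ← Finset.sum_add_distrib]
  exact Finset.sum_congr rfl fun w _ => by linear_combination 2 * a * b * h w w (.inl rfl)

lemma dirichletEnergy_add (h : Separated G f g) (a b : ℝ) :
    dirichletEnergy G (fun w => a * f w + b * g w) =
      a ^ 2 * dirichletEnergy G f + b ^ 2 * dirichletEnergy G g := by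
  simp only [dirichletEnergy, Finset.mul_sum, ← Finset.sum_add_distrib]
  refine Finset.sum_congr rfl fun w _ => Finset.sum_congr rfl fun w' _ => ?_
  split_ifs with hadj
  · linear_combination 2 * a * b * (h w w (.inl rfl) - h w w' (.inr hadj) -
      h w' w (.inr hadj.symm) + h w' w' (.inl rfl))
  · ring

end Separated

variable {u₀ u₁ v₀ v₁ : V} {k : ℕ}

lemma separated_edgeTest (hconn : G.Connected) (r : ℝ)
    (hfar : ∀ u v, (u = u₀ ∨ u = u₁) → (v = v₀ ∨ v = v₁) → 2 * k + 2 ≤ G.dist u v) :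
    Separated G (edgeTest G u₀ u₁ k r) (edgeTest G v₀ v₁ k r) := by
  intro w w' hww'
  by_contra hne
  have hw : distToEdge G u₀ u₁ w ≤ k :=
    not_lt.mp fun h => hne (by simp only [edgeTest, decayProfile_of_lt r h, zero_mul])
  have hw' : distToEdge G v₀ v₁ w' ≤ k :=
    not_lt.mp fun h => hne (by simp only [edgeTest, decayProfile_of_lt r h, mul_zero])
  obtain ⟨u, hu, hdu⟩ := exists_dist_eq_distToEdge (G := G) u₀ u₁ w
  obtain ⟨v, hv, hdv⟩ := exists_dist_eq_distToEdge (G := G) v₀ v₁ w'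
  have hstep : G.dist w w' ≤ 1 := by
    rcases hww' with rfl | hadj
    · simp
    · exact (dist_eq_one_iff_adj.mpr hadj).le
  have h₁ := hconn.dist_triangle (u := u) (v := w) (w := w')
  have h₂ := hconn.dist_triangle (u := u) (v := w') (w := v)
  have h₃ : G.dist w' v = G.dist v w' := dist_comm
  have := hfar u v hu hv
  omega

variable [Fintype V] {d : ℕ}

theorem exists_test_pair (hconn : G.Connected) (hdeg : ∀ w, G.degree w ≤ d)
    (he : G.Adj u₀ u₁) (hf : G.Adj v₀ v₁)
    (hfar : ∀ u v, (u = u₀ ∨ u = u₁) → (v = v₀ ∨ v = v₁) → 2 * k + 2 ≤ G.dist u v)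
    {s : ℝ} (hs : 0 < s) (hsd : s ^ 2 = (d : ℝ) - 1) :
    ∃ x y : V → ℝ, ∑ w, x w = 0 ∧ 0 < ∑ w, x w ^ 2 ∧ ∑ w, y w ^ 2 = ∑ w, x w ^ 2 ∧
      (s + 1) ^ 2 * dirichletEnergy G x ≤
        (s - 1) ^ 2 * dirichletEnergy G y + 8 * s ^ 3 / ((k : ℝ) + 1) * ∑ w, x w ^ 2 := by
  set F := edgeTest G u₀ u₁ k s⁻¹
  set F' := edgeTest G v₀ v₁ k s⁻¹
  set α := ∑ w, F' w
  set β := ∑ w, F w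
  have hsep : Separated G F F' := separated_edgeTest hconn s⁻¹ hfar
  have hsep' : Separated G (altEdgeTest G u₀ u₁ k s⁻¹) (altEdgeTest G v₀ v₁ k s⁻¹) :=
    hsep.mul_left (fun w => (-1) ^ distToEdge G u₀ u₁ w) (fun w => (-1) ^ distToEdge G v₀ v₁ w)
  have halt : ∀ (a b : V), ∑ w, altEdgeTest G a b k s⁻¹ w ^ 2 = ∑ w, edgeTest G a b k s⁻¹ w ^ 2 :=
    fun a b => Finset.sum_congr rfl fun w _ => altProfile_sq _ _ _
  have hα : 1 ≤ α := by
    have := Finset.single_le_sum (fun w _ => decayProfile_nonneg k (inv_nonneg.mpr hs.le) _)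
      (Finset.mem_univ v₀) (f := F')
    rwa [show F' v₀ = 1 from edgeTest_left] at this
  have hF : 1 ≤ ∑ w, F w ^ 2 := by
    have := Finset.single_le_sum (fun w _ => sq_nonneg (F w)) (Finset.mem_univ u₀)
    rwa [show F u₀ = 1 from edgeTest_left, one_pow] at this
  have hF' : 0 ≤ ∑ w, F' w ^ 2 := Finset.sum_nonneg fun w _ => sq_nonneg _
  have hEF := dirichletEnergy_edgeTest_le hconn hdeg he hs hsd k
  have hEF' := dirichletEnergy_edgeTest_le hconn hdeg hf hs hsd k
  refine ⟨fun w => α * F w + (-β) * F' w,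
    fun w => α * altEdgeTest G u₀ u₁ k s⁻¹ w + β * altEdgeTest G v₀ v₁ k s⁻¹ w, ?_, ?_, ?_, ?_⟩
  · simp only [Finset.sum_add_distrib, ← Finset.mul_sum]
    ring
  · rw [hsep.sum_sq_add]
    nlinarith [sq_nonneg β]
  · rw [hsep.sum_sq_add, hsep'.sum_sq_add, halt, halt, neg_sq]
  · rw [hsep.sum_sq_add, hsep.dirichletEnergy_add, hsep'.dirichletEnergy_add, neg_sq]
    have hs3 : 0 ≤ 8 * s ^ 3 / ((k : ℝ) + 1) := by positivity
    nlinarith [mul_le_mul_of_nonneg_left hEF (sq_nonneg α),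
      mul_le_mul_of_nonneg_left hEF' (sq_nonneg β)]

end TwoEdges

theorem stmt8_general {n : ℕ} (d k : ℕ) (hd : 2 ≤ d)
    (G : SimpleGraph (Fin n)) (hconn : G.Connected)
    (hreg : G.IsRegularOfDegree d)
    (u₀ u₁ v₀ v₁ : Fin n) (he : G.Adj u₀ u₁) (hf : G.Adj v₀ v₁)
    (h00 : ((2 * k + 2 : ℕ) : ℕ∞) ≤ G.edist u₀ v₀)
    (h01 : ((2 * k + 2 : ℕ) : ℕ∞) ≤ G.edist u₀ v₁)
    (h10 : ((2 * k + 2 : ℕ) : ℕ∞) ≤ G.edist u₁ v₀)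
    (h11 : ((2 * k + 2 : ℕ) : ℕ∞) ≤ G.edist u₁ v₁) :
    (Real.sqrt ((d : ℝ) - 1) + 1) ^ 2 * lapEig G 2 ≤
      (Real.sqrt ((d : ℝ) - 1) - 1) ^ 2 * lapEig G n +
        4 * ((d : ℝ) - 1) ^ ((3 : ℝ) / 2) / ((k : ℝ) + 1) := by
  have hn : 1 < n := by simpa using Fintype.one_lt_card_iff_nontrivial.mpr ⟨⟨u₀, u₁, he.ne⟩⟩
  have hd1 : (0 : ℝ) < d - 1 := by
    have : (2 : ℝ) ≤ d := by exact_mod_cast hd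
    linarith
  set s := Real.sqrt ((d : ℝ) - 1)
  have hs : 0 < s := Real.sqrt_pos.mpr hd1
  have hsd : s ^ 2 = (d : ℝ) - 1 := Real.sq_sqrt hd1.le
  have hfar : ∀ u v, (u = u₀ ∨ u = u₁) → (v = v₀ ∨ v = v₁) → 2 * k + 2 ≤ G.dist u v := by
    have hdist : ∀ u v, ((2 * k + 2 : ℕ) : ℕ∞) ≤ G.edist u v → 2 * k + 2 ≤ G.dist u v :=
      fun u v h => by rwa [← (hconn u v).coe_dist_eq_edist, Nat.cast_le] at h
    rintro u v (rfl | rfl) (rfl | rfl)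
    exacts [hdist _ _ h00, hdist _ _ h01, hdist _ _ h10, hdist _ _ h11]
  obtain ⟨x, y, hx, hxpos, hyx, hxy⟩ :=
    exists_test_pair hconn (fun w => (hreg w).le) he hf hfar hs hsd
  have hpow : ((d : ℝ) - 1) ^ ((3 : ℝ) / 2) = s ^ 3 := by
    rw [show s = ((d : ℝ) - 1) ^ ((1 : ℝ) / 2) from Real.sqrt_eq_rpow _, ← Real.rpow_natCast,
      ← Real.rpow_mul hd1.le]
    norm_num
  rw [hpow]
  exact lapEig_bound_of_test_pair hconn hn hx hxpos hyx (by linear_combination hxy)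

/-- Let `d ≥ 2`, `k ≥ 1`, and let `G` be an `n`-vertex connected
`d`-regular graph containing two edges `u₀u₁` and `v₀v₁` at distance at least `2k+2`
(all four endpoint distances are at least `2k+2`). Then
`(√(d-1)+1)²·λ₂(G) ≤ (√(d-1)-1)²·λₙ(G) + 4(d-1)^{3/2}/(k+1)`. -/
theorem stmt8 {n : ℕ} (d k : ℕ) (hd : 2 ≤ d) (hk : 1 ≤ k)
    (G : SimpleGraph (Fin n)) (hconn : G.Connected)
    (hreg : G.IsRegularOfDegree d)
    (u₀ u₁ v₀ v₁ : Fin n) (he : G.Adj u₀ u₁) (hf : G.Adj v₀ v₁)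
    (h00 : ((2 * k + 2 : ℕ) : ℕ∞) ≤ G.edist u₀ v₀)
    (h01 : ((2 * k + 2 : ℕ) : ℕ∞) ≤ G.edist u₀ v₁)
    (h10 : ((2 * k + 2 : ℕ) : ℕ∞) ≤ G.edist u₁ v₀)
    (h11 : ((2 * k + 2 : ℕ) : ℕ∞) ≤ G.edist u₁ v₁) :
    (Real.sqrt ((d : ℝ) - 1) + 1) ^ 2 * lapEig G 2 ≤
      (Real.sqrt ((d : ℝ) - 1) - 1) ^ 2 * lapEig G n +
        4 * ((d : ℝ) - 1) ^ ((3 : ℝ) / 2) / ((k : ℝ) + 1) :=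
  stmt8_general d k hd G hconn hreg u₀ u₁ v₀ v₁ he hf h00 h01 h10 h11
end

section
/- Let s ≥ 1 and k ≥ 1 be integers, let d ≥ 3 be an integer, and let G be an n-vertex d-regular graph containing 4s − 2 distinct edges that are pairwise at distance at least 2k + 2 from one another. Then (d + 2√(d−1)) · λ_{s+1}(G) ≤ (d − 2√(d−1)) · λ_{n−s+1}(G) + 4(d−1)^{3/2}/(k+1). -/
/-!
Around each of the given edges put two test vectors supported on the ball of radius `k`, equal to
`r ^ j` and `(-r) ^ j` at distance `j` from the edge, where `r = (d - 1) ^ (-1/2)`. With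
`α = d + 2√(d-1)` and `β = d - 2√(d-1)` one has `α (1 - r)² = β (1 + r)²`, so in the Laplacian
forms `α xᵀLx` and `β yᵀLy` every edge inside the ball contributes equally and only the edges
leaving the ball are left over. Since the spheres around an edge grow by a factor at most `d - 1`,
the outermost sphere carries at most a `1/(k+1)` share of `‖x‖²`, which bounds these boundary
edges by `4 (d-1)^{3/2} / (k+1) · ‖x‖²`.

The balls are pairwise at distance at least two, so the test vectors are orthogonal both for the
identity and for `L`. As `4s - 2 > s + (s - 1)`, some nonzero combination makes the `x`-part
orthogonal to the eigenvectors of the `s` smallest eigenvalues and the `y`-part orthogonal to those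
of the `s - 1` largest, and comparing Rayleigh quotients gives the inequality.
-/

open Matrix SimpleGraph

attribute [local instance] Classical.propDecidable

open Finset

theorem exists_ne_zero_map_sum_smul_eq_zero {K ι M N V W : Type*} [Field K] [Fintype ι]
    [AddCommGroup M] [Module K M] [AddCommGroup N] [Module K N]
    [AddCommGroup V] [Module K V] [FiniteDimensional K V]
    [AddCommGroup W] [Module K W] [FiniteDimensional K W]
    (f : M →ₗ[K] V) (g : N →ₗ[K] W) (X : ι → M) (Y : ι → N)
    (hcard : Module.finrank K V + Module.finrank K W < Fintype.card ι) :
    ∃ c : ι → K, c ≠ 0 ∧ f (∑ i, c i • X i) = 0 ∧ g (∑ i, c i • Y i) = 0 := by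
  let Φ := (f ∘ₗ Fintype.linearCombination K X).prod (g ∘ₗ Fintype.linearCombination K Y)
  have hker : LinearMap.ker Φ ≠ ⊥ :=
    LinearMap.ker_ne_bot_of_finrank_lt (by simpa [Module.finrank_prod] using hcard)
  obtain ⟨c, hc, hc0⟩ := (Submodule.ne_bot_iff _).mp hker
  refine ⟨c, hc0, ?_⟩
  simpa [Φ, Fintype.linearCombination_apply] using hc

namespace Matrix

variable {m : Type*} [Fintype m] {ι : Type*} [Fintype ι]

theorem sum_smul_dotProduct_mulVec_sum_smul (B : Matrix m m ℝ) (F : ι → m → ℝ) (c : ι → ℝ)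
    (hF : Pairwise fun i j => F i ⬝ᵥ (B *ᵥ F j) = 0) :
    (∑ i, c i • F i) ⬝ᵥ (B *ᵥ ∑ i, c i • F i) = ∑ i, c i ^ 2 * (F i ⬝ᵥ (B *ᵥ F i)) := by
  simp only [mulVec_sum, mulVec_smul, sum_dotProduct, dotProduct_sum, smul_dotProduct,
    dotProduct_smul, smul_eq_mul]
  refine sum_congr rfl fun i _ => ?_
  rw [sum_eq_single i (fun j _ hji => by simp [hF hji]) (by simp)]
  ring

theorem sum_smul_dotProduct_sum_smul (F : ι → m → ℝ) (c : ι → ℝ)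
    (hF : Pairwise fun i j => F i ⬝ᵥ F j = 0) :
    (∑ i, c i • F i) ⬝ᵥ (∑ i, c i • F i) = ∑ i, c i ^ 2 * (F i ⬝ᵥ F i) := by
  simpa only [one_mulVec] using
    sum_smul_dotProduct_mulVec_sum_smul 1 F c (by simpa only [one_mulVec] using hF)

theorem dotProduct_eq_zero_of_disjoint_support {f g : m → ℝ}
    (h : Disjoint (Function.support f) (Function.support g)) : f ⬝ᵥ g = 0 :=
  sum_eq_zero fun u _ => by
    by_cases hf : f u = 0
    · rw [hf, zero_mul]
    · rw [Function.notMem_support.mp (Set.disjoint_left.mp h hf), mul_zero]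

end Matrix

namespace Matrix.IsHermitian

variable {n : ℕ} {A : Matrix (Fin n) (Fin n) ℝ}

section

variable (hA : A.IsHermitian)

noncomputable def eigenCoords : (Fin n → ℝ) →ₗ[ℝ] Fin n → ℝ :=
  (star (hA.eigenvectorUnitary : Matrix (Fin n) (Fin n) ℝ)).mulVecLin

theorem vecMul_eigenvectorUnitary (z : Fin n → ℝ) :
    z ᵥ* (hA.eigenvectorUnitary : Matrix (Fin n) (Fin n) ℝ) = hA.eigenCoords z := by
  rw [eigenCoords, mulVecLin_apply, star_eq_conjTranspose, conjTranspose_eq_transpose_of_trivial,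
    ← vecMul_transpose, transpose_transpose]

theorem dotProduct_mulVec_eq_sum_eigenCoords (z : Fin n → ℝ) :
    z ⬝ᵥ (A *ᵥ z) = ∑ i, hA.eigenvalues i * hA.eigenCoords z i ^ 2 := by
  conv_lhs => rw [hA.spectral_theorem, Unitary.conjStarAlgAut_apply]
  rw [← mulVec_mulVec, ← mulVec_mulVec, dotProduct_mulVec, vecMul_eigenvectorUnitary]
  simp only [dotProduct, mulVec_diagonal, Function.comp_apply, RCLike.ofReal_real_eq_id, id_eq,
    eigenCoords, mulVecLin_apply]
  exact sum_congr rfl fun i _ => by ring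

theorem dotProduct_self_eq_sum_eigenCoords (z : Fin n → ℝ) :
    z ⬝ᵥ z = ∑ i, hA.eigenCoords z i ^ 2 := by
  set U : Matrix (Fin n) (Fin n) ℝ := ↑hA.eigenvectorUnitary
  have hU : U * star U = 1 := mem_unitaryGroup_iff.mp hA.eigenvectorUnitary.2
  calc z ⬝ᵥ z = z ⬝ᵥ ((U * star U) *ᵥ z) := by rw [hU, one_mulVec]
    _ = _ := by
      rw [← mulVec_mulVec, dotProduct_mulVec, vecMul_eigenvectorUnitary]
      simp only [dotProduct, eigenCoords, mulVecLin_apply, sq, U]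

theorem mul_dotProduct_le_of_eigenCoords {μ : ℝ} {z : Fin n → ℝ}
    (h : ∀ i, hA.eigenCoords z i ≠ 0 → μ ≤ hA.eigenvalues i) :
    μ * (z ⬝ᵥ z) ≤ z ⬝ᵥ (A *ᵥ z) := by
  rw [hA.dotProduct_self_eq_sum_eigenCoords, hA.dotProduct_mulVec_eq_sum_eigenCoords, mul_sum]
  refine sum_le_sum fun i _ => ?_
  by_cases hi : hA.eigenCoords z i = 0
  · simp [hi]
  · exact mul_le_mul_of_nonneg_right (h i hi) (sq_nonneg _)

theorem dotProduct_le_mul_of_eigenCoords {μ : ℝ} {z : Fin n → ℝ}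
    (h : ∀ i, hA.eigenCoords z i ≠ 0 → hA.eigenvalues i ≤ μ) :
    z ⬝ᵥ (A *ᵥ z) ≤ μ * (z ⬝ᵥ z) := by
  rw [hA.dotProduct_self_eq_sum_eigenCoords, hA.dotProduct_mulVec_eq_sum_eigenCoords, mul_sum]
  refine sum_le_sum fun i _ => ?_
  by_cases hi : hA.eigenCoords z i = 0
  · simp [hi]
  · exact mul_le_mul_of_nonneg_right (h i hi) (sq_nonneg _)

noncomputable def lowerEigenCoords (p : Fin n) : (Fin n → ℝ) →ₗ[ℝ] Fin p → ℝ :=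
  LinearMap.funLeft ℝ ℝ (Tuple.sort hA.eigenvalues ∘ Fin.castLE p.isLt.le) ∘ₗ hA.eigenCoords

noncomputable def upperEigenCoords (q : Fin n) : (Fin n → ℝ) →ₗ[ℝ] Fin (n - 1 - q) → ℝ :=
  LinearMap.funLeft ℝ ℝ (fun t => Tuple.sort hA.eigenvalues ⟨q + 1 + t, by omega⟩) ∘ₗ
    hA.eigenCoords

theorem sortedEigs_eq : sortedEigs A = hA.eigenvalues ∘ Tuple.sort hA.eigenvalues := by
  rw [sortedEigs, dif_pos hA]

theorem sortedEigs_mul_le_of_lowerEigenCoords_eq_zero {p : Fin n} {z : Fin n → ℝ}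
    (hz : hA.lowerEigenCoords p z = 0) : sortedEigs A p * (z ⬝ᵥ z) ≤ z ⬝ᵥ (A *ᵥ z) := by
  refine hA.mul_dotProduct_le_of_eigenCoords fun i hi => ?_
  set σ := Tuple.sort hA.eigenvalues
  have hp : p ≤ σ.symm i := by
    by_contra! hlt
    refine hi ?_
    simpa [lowerEigenCoords, σ] using congrFun hz ⟨σ.symm i, hlt⟩
  simpa [hA.sortedEigs_eq, σ] using Tuple.monotone_sort hA.eigenvalues hp

theorem dotProduct_le_sortedEigs_mul_of_upperEigenCoords_eq_zero {q : Fin n} {z : Fin n → ℝ}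
    (hz : hA.upperEigenCoords q z = 0) : z ⬝ᵥ (A *ᵥ z) ≤ sortedEigs A q * (z ⬝ᵥ z) := by
  refine hA.dotProduct_le_mul_of_eigenCoords fun i hi => ?_
  set σ := Tuple.sort hA.eigenvalues
  have hq : σ.symm i ≤ q := by
    by_contra! hlt
    refine hi ?_
    have hj : ((σ.symm i : ℕ) - (q + 1)) < n - 1 - q := by omega
    have := congrFun hz ⟨_, hj⟩
    simp only [upperEigenCoords, LinearMap.coe_comp, Function.comp_apply, LinearMap.funLeft_apply,
      Pi.zero_apply] at this
    rwa [show (⟨q + 1 + ((σ.symm i : ℕ) - (q + 1)), _⟩ : Fin n) = σ.symm i from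
      Fin.ext (by simp only; omega), Equiv.apply_symm_apply] at this
  simpa [hA.sortedEigs_eq, σ] using Tuple.monotone_sort hA.eigenvalues hq

end

theorem mul_sortedEigs_le_of_pairwise_orthogonal (hA : A.IsHermitian) {ι : Type*} [Fintype ι]
    (p q : Fin n) (hcard : p + (n - 1 - q) < Fintype.card ι) {α β C : ℝ} (hα : 0 ≤ α)
    (hβ : 0 ≤ β) (X Y : ι → Fin n → ℝ)
    (hX : Pairwise fun i j => X i ⬝ᵥ (A *ᵥ X j) = 0 ∧ X i ⬝ᵥ X j = 0)
    (hY : Pairwise fun i j => Y i ⬝ᵥ (A *ᵥ Y j) = 0 ∧ Y i ⬝ᵥ Y j = 0)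
    (hXY : ∀ i, Y i ⬝ᵥ Y i = X i ⬝ᵥ X i) (hX0 : ∀ i, X i ≠ 0)
    (hbound : ∀ i, α * (X i ⬝ᵥ (A *ᵥ X i)) ≤ β * (Y i ⬝ᵥ (A *ᵥ Y i)) + C * (X i ⬝ᵥ X i)) :
    α * sortedEigs A p ≤ β * sortedEigs A q + C := by
  obtain ⟨c, hc0, hz, hz'⟩ := exists_ne_zero_map_sum_smul_eq_zero
    (hA.lowerEigenCoords p) (hA.upperEigenCoords q) X Y (by simpa using hcard)
  set z := ∑ i, c i • X i
  set z' := ∑ i, c i • Y i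
  have hzA : z ⬝ᵥ (A *ᵥ z) = ∑ i, c i ^ 2 * (X i ⬝ᵥ (A *ᵥ X i)) :=
    sum_smul_dotProduct_mulVec_sum_smul A X c fun i j hij => (hX hij).1
  have hzA' : z' ⬝ᵥ (A *ᵥ z') = ∑ i, c i ^ 2 * (Y i ⬝ᵥ (A *ᵥ Y i)) :=
    sum_smul_dotProduct_mulVec_sum_smul A Y c fun i j hij => (hY hij).1
  have hzz : z ⬝ᵥ z = ∑ i, c i ^ 2 * (X i ⬝ᵥ X i) :=
    sum_smul_dotProduct_sum_smul X c fun i j hij => (hX hij).2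
  have hzz' : z' ⬝ᵥ z' = z ⬝ᵥ z := by
    rw [hzz, sum_smul_dotProduct_sum_smul Y c fun i j hij => (hY hij).2]
    simp only [hXY]
  have hpos : 0 < z ⬝ᵥ z := by
    obtain ⟨i, hi⟩ := Function.ne_iff.mp hc0
    rw [hzz]
    have hnn (v : Fin n → ℝ) : 0 ≤ v ⬝ᵥ v := sum_nonneg fun u _ => mul_self_nonneg (v u)
    refine sum_pos' (fun j _ => mul_nonneg (sq_nonneg _) (hnn _)) ⟨i, mem_univ _, ?_⟩
    exact mul_pos (sq_pos_of_ne_zero hi)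
      ((hnn _).lt_of_ne (Ne.symm (dotProduct_self_eq_zero.not.mpr (hX0 i))))
  have hcomb : α * (z ⬝ᵥ (A *ᵥ z)) ≤ β * (z' ⬝ᵥ (A *ᵥ z')) + C * (z ⬝ᵥ z) := by
    rw [hzA, hzA', hzz, mul_sum, mul_sum, mul_sum, ← sum_add_distrib]
    refine sum_le_sum fun i _ => ?_
    nlinarith [hbound i, sq_nonneg (c i)]
  have hlow := hA.sortedEigs_mul_le_of_lowerEigenCoords_eq_zero hz
  have hupp := hA.dotProduct_le_sortedEigs_mul_of_upperEigenCoords_eq_zero hz'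
  rw [hzz'] at hupp
  refine le_of_mul_le_mul_right ?_ hpos
  nlinarith [mul_le_mul_of_nonneg_left hlow hα, mul_le_mul_of_nonneg_left hupp hβ]

end Matrix.IsHermitian

noncomputable def ballProfile (k : ℕ) (r : ℝ) (j : ℕ∞) : ℝ :=
  if j ≤ k then r ^ j.toNat else 0

theorem ballProfile_neg_sq (k : ℕ) (r : ℝ) (j : ℕ∞) :
    ballProfile k (-r) j ^ 2 = ballProfile k r j ^ 2 := by
  unfold ballProfile
  split_ifs
  · rw [← pow_mul, ← pow_mul, mul_comm, pow_mul, pow_mul, neg_sq]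
  · rfl

theorem ballProfile_sq_eq_sum (k : ℕ) (r : ℝ) (i : ℕ∞) :
    ballProfile k r i ^ 2 = ∑ j ∈ range (k + 1), if i = j then r ^ (2 * j) else 0 := by
  induction i using ENat.recTopCoe with
  | top => simp [ballProfile]
  | coe i =>
    simp only [ballProfile, Nat.cast_le, ENat.toNat_natCast, Nat.cast_inj, sum_ite_eq, mem_range]
    split_ifs <;> first | omega | ring

theorem ballProfile_edge_eq {α β r : ℝ} (hr : α * (1 - r) ^ 2 = β * (1 + r) ^ 2) (k : ℕ)
    {i j : ℕ∞} (hij : i ≤ j + 1) (hji : j ≤ i + 1) :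
    α * (ballProfile k r i - ballProfile k r j) ^ 2
        - β * (ballProfile k (-r) i - ballProfile k (-r) j) ^ 2 =
      (if i = k ∧ (k : ℕ∞) < j then (α - β) * r ^ (2 * k) else 0) +
        (if j = k ∧ (k : ℕ∞) < i then (α - β) * r ^ (2 * k) else 0) := by
  wlog h : i ≤ j generalizing i j
  · rw [add_comm, ← this hji hij (le_of_not_ge h)]
    ring
  induction i using ENat.recTopCoe with
  | top => simp [top_le_iff.mp h, ballProfile]
  | coe i =>
    lift j to ℕ using ne_top_of_le_ne_top (by simp) hji
    norm_cast at h hji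
    obtain rfl | rfl : j = i ∨ j = i + 1 := by omega
    · have : ¬(j = k ∧ k < j) := by omega
      simp [this]
    have hsq : ((-1 : ℝ) ^ i) ^ 2 = 1 := by rw [← pow_mul, mul_comm, pow_mul]; simp
    simp only [ballProfile, Nat.cast_le, ENat.toNat_natCast, Nat.cast_inj, Nat.cast_lt, neg_pow r]
    split_ifs <;> first | omega | skip
    · linear_combination (r ^ i) ^ 2 * hr - β * (r ^ i) ^ 2 * (1 + r) ^ 2 * hsq
    · obtain rfl : i = k := by omega
      linear_combination (-β) * (r ^ i) ^ 2 * hsq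
    · simp

namespace SimpleGraph

variable {V : Type*} (G : SimpleGraph V)

noncomputable def edgeEdist (p q v : V) : ℕ∞ := min (G.edist v p) (G.edist v q)

noncomputable def edgeBallVector (p q : V) (k : ℕ) (r : ℝ) (v : V) : ℝ :=
  ballProfile k r (G.edgeEdist p q v)

noncomputable def edgeSphere [Fintype V] (p q : V) (j : ℕ) : Finset V :=
  {v | G.edgeEdist p q v = j}

variable {G} {p q u v : V} {k d : ℕ} {r : ℝ}

theorem edgeEdist_left : G.edgeEdist p q p = 0 := by simp [edgeEdist]

theorem edgeBallVector_left : G.edgeBallVector p q k r p = 1 := by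
  simp [edgeBallVector, ballProfile, edgeEdist_left]

theorem edgeEdist_le_of_edgeBallVector_ne_zero (h : G.edgeBallVector p q k r v ≠ 0) :
    G.edgeEdist p q v ≤ k := by
  by_contra hv
  simp [edgeBallVector, ballProfile, hv] at h

theorem edgeEdist_le_add_edist : G.edgeEdist p q v ≤ G.edgeEdist p q u + G.edist u v := by
  have h (t : V) : G.edist v t ≤ G.edist u t + G.edist u v := by
    rw [add_comm, G.edist_comm (u := u)]
    exact G.edist_triangle
  rw [edgeEdist, edgeEdist, ← min_add_add_right]
  exact min_le_min (h p) (h q)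

theorem edgeEdist_le_add_one (h : G.Adj u v) : G.edgeEdist p q v ≤ G.edgeEdist p q u + 1 :=
  edist_eq_one_iff_adj.mpr h ▸ edgeEdist_le_add_edist

theorem exists_adj_edgeEdist_le_of_eq_succ {j : ℕ} (h : G.edgeEdist p q u = (j + 1 : ℕ)) :
    ∃ w, G.Adj u w ∧ G.edgeEdist p q w ≤ j := by
  have step (t : V) (ht : G.edist u t = (j + 1 : ℕ)) : ∃ w, G.Adj u w ∧ G.edist w t ≤ j := by
    obtain ⟨W, hW⟩ := exists_walk_of_edist_eq_coe ht
    cases W with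
    | nil => simp at hW
    | cons hadj W' =>
      exact ⟨_, hadj, (edist_le W').trans (by simp_all)⟩
  rcases min_eq_iff.mp h with ⟨ht, -⟩ | ⟨ht, -⟩
  · obtain ⟨w, hw, hle⟩ := step p ht
    exact ⟨w, hw, (min_le_left _ _).trans hle⟩
  · obtain ⟨w, hw, hle⟩ := step q ht
    exact ⟨w, hw, (min_le_right _ _).trans hle⟩

theorem exists_adj_edgeEdist_le (hpq : G.Adj p q) (hu : G.edgeEdist p q u ≠ ⊤) :
    ∃ w, G.Adj u w ∧ G.edgeEdist p q w ≤ G.edgeEdist p q u := by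
  obtain ⟨j, hj⟩ := WithTop.ne_top_iff_exists.mp hu
  cases j with
  | zero =>
    rcases min_eq_iff.mp hj.symm with ⟨h, -⟩ | ⟨h, -⟩ <;>
      obtain rfl := edist_eq_zero_iff.mp h
    · exact ⟨q, hpq, by simp [edgeEdist]⟩
    · exact ⟨p, hpq.symm, by simp [edgeEdist]⟩
  | succ j =>
    obtain ⟨w, hw, hle⟩ := exists_adj_edgeEdist_le_of_eq_succ hj.symm
    exact ⟨w, hw, hle.trans (hj ▸ Nat.cast_le.mpr j.le_succ)⟩

theorem ne_and_not_adj_of_edgeEdist_le {p' q' w : V} {m : ℕ}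
    (hp' : ((2 * m + 2 : ℕ) : ℕ∞) ≤ G.edgeEdist p q p')
    (hq' : ((2 * m + 2 : ℕ) : ℕ∞) ≤ G.edgeEdist p q q')
    (hu : G.edgeEdist p q u ≤ m) (hw : G.edgeEdist p' q' w ≤ m) : u ≠ w ∧ ¬G.Adj u w := by
  rw [and_comm, ← not_or, ← edist_le_one_iff_adj_or_eq]
  intro huw
  have far (t : V) (ht : ((2 * m + 2 : ℕ) : ℕ∞) ≤ G.edgeEdist p q t) (hwt : G.edist w t ≤ m) :
      False := by
    have := ht.trans <| edgeEdist_le_add_edist.trans <|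
      add_le_add hu (G.edist_triangle.trans (add_le_add huw hwt))
    norm_cast at this
    omega
  rcases min_le_iff.mp hw with h | h
  · exact far p' hp' h
  · exact far q' hq' h

section Fintype

variable [Fintype V]

theorem edgeBallVector_neg_dotProduct_self :
    G.edgeBallVector p q k (-r) ⬝ᵥ G.edgeBallVector p q k (-r) =
      G.edgeBallVector p q k r ⬝ᵥ G.edgeBallVector p q k r := by
  simp only [dotProduct, ← sq, edgeBallVector, ballProfile_neg_sq]

theorem sum_card_edgeSphere_mul_eq (k : ℕ) (r : ℝ) :
    ∑ j ∈ range (k + 1), #(G.edgeSphere p q j) * r ^ (2 * j) =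
      G.edgeBallVector p q k r ⬝ᵥ G.edgeBallVector p q k r := by
  simp only [dotProduct, ← sq, edgeBallVector, ballProfile_sq_eq_sum]
  rw [sum_comm]
  refine sum_congr rfl fun j _ => ?_
  rw [← sum_filter, sum_const, nsmul_eq_mul]
  rfl

variable [DecidableRel G.Adj]

theorem card_adj_edgeEdist_lt_le (hreg : G.IsRegularOfDegree d) (hpq : G.Adj p q)
    (hu : G.edgeEdist p q u ≠ ⊤) :
    #{v | G.Adj u v ∧ G.edgeEdist p q u < G.edgeEdist p q v} ≤ d - 1 := by
  obtain ⟨w, hw, hwu⟩ := exists_adj_edgeEdist_le hpq hu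
  have hsub : ({v | G.Adj u v ∧ G.edgeEdist p q u < G.edgeEdist p q v} : Finset V) ⊆
      (G.neighborFinset u).erase w := fun v hv => by
    simp only [mem_filter, mem_univ, true_and] at hv
    exact mem_erase.mpr ⟨by rintro rfl; exact (hwu.trans_lt hv.2).false, by simpa using hv.1⟩
  calc _ ≤ #((G.neighborFinset u).erase w) := card_le_card hsub
    _ = d - 1 := by
      rw [card_erase_of_mem (by simpa using hw), card_neighborFinset_eq_degree, hreg u]

theorem card_edgeSphere_succ_le (hreg : G.IsRegularOfDegree d) (hpq : G.Adj p q) (j : ℕ) :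
    #(G.edgeSphere p q (j + 1)) ≤ #(G.edgeSphere p q j) * (d - 1) := by
  refine (card_le_card fun v hv => ?_).trans <| card_biUnion_le_card_mul _
    (fun u => {v | G.Adj u v ∧ G.edgeEdist p q u < G.edgeEdist p q v}) _ fun u hu =>
      card_adj_edgeEdist_lt_le (u := u) hreg hpq (by simp_all [edgeSphere])
  simp only [edgeSphere, mem_filter, mem_univ, true_and] at hv
  obtain ⟨w, hw, hwj⟩ := exists_adj_edgeEdist_le_of_eq_succ hv
  have hjw : (j : ℕ∞) ≤ G.edgeEdist p q w := by
    have := hv ▸ edgeEdist_le_add_one (p := p) (q := q) hw.symm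
    exact (ENat.add_le_add_iff_right ENat.one_ne_top).mp (by exact_mod_cast this)
  have hwj' : G.edgeEdist p q w = j := le_antisymm hwj hjw
  simp only [mem_biUnion, mem_filter, mem_univ, true_and, edgeSphere]
  exact ⟨w, hwj', hw.symm, by rw [hwj', hv]; exact_mod_cast j.lt_succ_self⟩

theorem IsRegularOfDegree.cast_sub_one_of_adj (hreg : G.IsRegularOfDegree d) (hpq : G.Adj p q) :
    ((d - 1 : ℕ) : ℝ) = d - 1 :=
  Nat.cast_pred (hreg p ▸ G.degree_pos_iff_exists_adj p |>.mpr ⟨q, hpq⟩)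

theorem card_edgeSphere_mul_le_dotProduct (hreg : G.IsRegularOfDegree d)
    (hpq : G.Adj p q) (k : ℕ) (hdr : ((d : ℝ) - 1) * r ^ 2 ≤ 1) :
    ((k : ℝ) + 1) * (#(G.edgeSphere p q k) * r ^ (2 * k)) ≤
      G.edgeBallVector p q k r ⬝ᵥ G.edgeBallVector p q k r := by
  have hanti : Antitone fun j => (#(G.edgeSphere p q j) : ℝ) * r ^ (2 * j) := by
    refine antitone_nat_of_succ_le fun j => ?_
    have hcard : (#(G.edgeSphere p q (j + 1)) : ℝ) ≤ #(G.edgeSphere p q j) * ((d : ℝ) - 1) := by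
      rw [← hreg.cast_sub_one_of_adj hpq]
      exact_mod_cast card_edgeSphere_succ_le hreg hpq j
    calc (#(G.edgeSphere p q (j + 1)) : ℝ) * r ^ (2 * (j + 1))
        ≤ #(G.edgeSphere p q j) * ((d : ℝ) - 1) * (r ^ 2) ^ j * r ^ 2 := by
          rw [mul_add, mul_one, pow_add, pow_mul, ← mul_assoc]
          gcongr
      _ = #(G.edgeSphere p q j) * r ^ (2 * j) * (((d : ℝ) - 1) * r ^ 2) := by
          rw [pow_mul]; ring
      _ ≤ #(G.edgeSphere p q j) * r ^ (2 * j) :=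
          mul_le_of_le_one_right (by rw [pow_mul]; positivity) hdr
  rw [← sum_card_edgeSphere_mul_eq]
  calc ((k : ℝ) + 1) * (#(G.edgeSphere p q k) * r ^ (2 * k))
      = ∑ _j ∈ range (k + 1), (#(G.edgeSphere p q k) : ℝ) * r ^ (2 * k) := by simp
    _ ≤ _ := sum_le_sum fun j hj => hanti (Nat.lt_succ_iff.mp (mem_range.mp hj))

variable [DecidableEq V] {α β : ℝ}

theorem dotProduct_lapMatrix_mulVec_self (x : V → ℝ) :
    x ⬝ᵥ (G.lapMatrix ℝ *ᵥ x) = (∑ u, ∑ v, if G.Adj u v then (x u - x v) ^ 2 else 0) / 2 := by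
  rw [← toLinearMap₂'_apply', lapMatrix_toLinearMap₂']

theorem dotProduct_lapMatrix_mulVec_eq_zero {f g : V → ℝ}
    (h : ∀ u v, f u ≠ 0 → g v ≠ 0 → u ≠ v ∧ ¬G.Adj u v) : f ⬝ᵥ (G.lapMatrix ℝ *ᵥ g) = 0 := by
  refine sum_eq_zero fun u _ => ?_
  by_cases hf : f u = 0
  · rw [hf, zero_mul]
  have hg (v : V) (hv : u = v ∨ G.Adj u v) : g v = 0 := by
    by_contra hg
    have := h u v hf hg
    tauto
  rw [lapMatrix_mulVec_apply, hg u (.inl rfl),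
    sum_eq_zero fun v hv => hg v (.inr ((mem_neighborFinset _ _ _).mp hv))]
  simp

theorem edgeBallVector_lapMatrix_sub_le (hreg : G.IsRegularOfDegree d) (hpq : G.Adj p q)
    (k : ℕ) (hβα : β ≤ α) (hr : α * (1 - r) ^ 2 = β * (1 + r) ^ 2) :
    α * (G.edgeBallVector p q k r ⬝ᵥ (G.lapMatrix ℝ *ᵥ G.edgeBallVector p q k r)) -
        β * (G.edgeBallVector p q k (-r) ⬝ᵥ (G.lapMatrix ℝ *ᵥ G.edgeBallVector p q k (-r))) ≤
      (α - β) * r ^ (2 * k) * (((d : ℝ) - 1) * #(G.edgeSphere p q k)) := by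
  set x := G.edgeBallVector p q k r
  set y := G.edgeBallVector p q k (-r)
  set ρ := G.edgeEdist p q
  set C := (α - β) * r ^ (2 * k)
  set b : V → V → ℝ := fun u v => if ρ u = k ∧ (k : ℕ∞) < ρ v then C else 0
  have hsplit : α * (x ⬝ᵥ (G.lapMatrix ℝ *ᵥ x)) - β * (y ⬝ᵥ (G.lapMatrix ℝ *ᵥ y)) =
      ((∑ u, ∑ v, if G.Adj u v then b u v else 0) +
        ∑ u, ∑ v, if G.Adj u v then b v u else 0) / 2 := by
    rw [dotProduct_lapMatrix_mulVec_self, dotProduct_lapMatrix_mulVec_self, mul_div_assoc',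
      mul_div_assoc', ← sub_div, mul_sum, mul_sum, ← sum_sub_distrib, ← sum_add_distrib]
    congr 1
    refine sum_congr rfl fun u _ => ?_
    rw [mul_sum, mul_sum, ← sum_sub_distrib, ← sum_add_distrib]
    refine sum_congr rfl fun v _ => ?_
    split_ifs with huv
    · exact ballProfile_edge_eq hr k (edgeEdist_le_add_one huv.symm) (edgeEdist_le_add_one huv)
    · simp
  have hsymm : (∑ u, ∑ v, if G.Adj u v then b v u else 0) =
      ∑ u, ∑ v, if G.Adj u v then b u v else 0 := by
    rw [sum_comm]
    exact sum_congr rfl fun u _ => sum_congr rfl fun v _ => by simp only [G.adj_comm v u]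
  have hC : 0 ≤ C := mul_nonneg (sub_nonneg.mpr hβα) (by rw [pow_mul]; positivity)
  have hboundary : (∑ u, ∑ v, if G.Adj u v then b u v else 0) ≤
      ∑ u, if ρ u = k then C * ((d : ℝ) - 1) else 0 := by
    refine sum_le_sum fun u _ => ?_
    split_ifs with hu
    · simp only [b, hu, true_and, ← ite_and]
      rw [← hu, ← sum_filter, sum_const, nsmul_eq_mul, mul_comm,
        ← hreg.cast_sub_one_of_adj hpq]
      exact mul_le_mul_of_nonneg_left
        (by exact_mod_cast card_adj_edgeEdist_lt_le hreg hpq (hu ▸ ENat.natCast_ne_top k)) hC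
    · simp [b, hu]
  rw [hsplit, hsymm]
  calc _ = ∑ u, ∑ v, (if G.Adj u v then b u v else 0) := by ring
    _ ≤ _ := hboundary
    _ = _ := by
      rw [sum_ite, sum_const_zero, add_zero, sum_const, nsmul_eq_mul, edgeSphere]
      ring

theorem edgeBallVector_lapMatrix_le (hreg : G.IsRegularOfDegree d) (hpq : G.Adj p q) (k : ℕ)
    (hβα : β ≤ α) (hr : α * (1 - r) ^ 2 = β * (1 + r) ^ 2) (hdr : ((d : ℝ) - 1) * r ^ 2 ≤ 1) :
    α * (G.edgeBallVector p q k r ⬝ᵥ (G.lapMatrix ℝ *ᵥ G.edgeBallVector p q k r)) ≤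
      β * (G.edgeBallVector p q k (-r) ⬝ᵥ (G.lapMatrix ℝ *ᵥ G.edgeBallVector p q k (-r))) +
        (α - β) * ((d : ℝ) - 1) / (k + 1) *
          (G.edgeBallVector p q k r ⬝ᵥ G.edgeBallVector p q k r) := by
  have hdiff := edgeBallVector_lapMatrix_sub_le hreg hpq k hβα hr
  have hnorm := card_edgeSphere_mul_le_dotProduct hreg hpq k hdr
  have hc : 0 ≤ (α - β) * ((d : ℝ) - 1) / (k + 1) := by
    have : (0 : ℝ) ≤ (d : ℝ) - 1 := hreg.cast_sub_one_of_adj hpq ▸ Nat.cast_nonneg _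
    have := sub_nonneg.mpr hβα
    positivity
  have hk : (k : ℝ) + 1 ≠ 0 := by positivity
  have hsphere : (α - β) * ((d : ℝ) - 1) / (k + 1) *
      (((k : ℝ) + 1) * (#(G.edgeSphere p q k) * r ^ (2 * k))) =
      (α - β) * r ^ (2 * k) * (((d : ℝ) - 1) * #(G.edgeSphere p q k)) := by
    field_simp
  linarith [mul_le_mul_of_nonneg_left hnorm hc]

theorem edgeBallVector_lapMatrix_le_of_eq_sq_add_one (hreg : G.IsRegularOfDegree d)
    (hpq : G.Adj p q) (k : ℕ) {t : ℝ} (ht : 0 < t) (hdt : (d : ℝ) = t ^ 2 + 1) :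
    ((d : ℝ) + 2 * t) *
        (G.edgeBallVector p q k t⁻¹ ⬝ᵥ (G.lapMatrix ℝ *ᵥ G.edgeBallVector p q k t⁻¹)) ≤
      ((d : ℝ) - 2 * t) *
          (G.edgeBallVector p q k (-t⁻¹) ⬝ᵥ (G.lapMatrix ℝ *ᵥ G.edgeBallVector p q k (-t⁻¹))) +
        4 * (((d : ℝ) - 1) * t) / ((k : ℝ) + 1) *
          (G.edgeBallVector p q k t⁻¹ ⬝ᵥ G.edgeBallVector p q k t⁻¹) := by
  refine (edgeBallVector_lapMatrix_le (α := d + 2 * t) (β := d - 2 * t) hreg hpq k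
    (by linarith) ?_ (le_of_eq ?_)).trans_eq (by ring)
  all_goals rw [hdt]; field_simp; ring

theorem edgeBallVector_pairwise_orthogonal {ι : Type*} {a b : ι → V} {k : ℕ}
    (hdist : ∀ i j, i ≠ j →
      ((2 * k + 2 : ℕ) : ℕ∞) ≤ G.edist (a i) (a j) ∧
      ((2 * k + 2 : ℕ) : ℕ∞) ≤ G.edist (a i) (b j) ∧
      ((2 * k + 2 : ℕ) : ℕ∞) ≤ G.edist (b i) (a j) ∧
      ((2 * k + 2 : ℕ) : ℕ∞) ≤ G.edist (b i) (b j)) (r : ℝ) :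
    Pairwise fun i j =>
      G.edgeBallVector (a i) (b i) k r ⬝ᵥ (G.lapMatrix ℝ *ᵥ G.edgeBallVector (a j) (b j) k r) = 0 ∧
      G.edgeBallVector (a i) (b i) k r ⬝ᵥ G.edgeBallVector (a j) (b j) k r = 0 := by
  intro i j hij
  obtain ⟨h₁, h₂, h₃, h₄⟩ := hdist i j hij
  have hfar (u v : V) (hu : G.edgeBallVector (a i) (b i) k r u ≠ 0)
      (hv : G.edgeBallVector (a j) (b j) k r v ≠ 0) : u ≠ v ∧ ¬G.Adj u v :=
    ne_and_not_adj_of_edgeEdist_le (le_min (G.edist_comm ▸ h₁) (G.edist_comm ▸ h₃))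
      (le_min (G.edist_comm ▸ h₂) (G.edist_comm ▸ h₄))
      (edgeEdist_le_of_edgeBallVector_ne_zero hu) (edgeEdist_le_of_edgeBallVector_ne_zero hv)
  exact ⟨dotProduct_lapMatrix_mulVec_eq_zero hfar, dotProduct_eq_zero_of_disjoint_support
    (Set.disjoint_left.mpr fun u hu hv => (hfar u u hu hv).1 rfl)⟩

end Fintype

end SimpleGraph

theorem lapEig_succ {n : ℕ} (G : SimpleGraph (Fin n)) (i : Fin n) :
    lapEig G (i + 1) = sortedEigs (G.lapMatrix ℝ) i := by
  simp [lapEig]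

theorem stmt11_general {n : ℕ} (s k d : ℕ) (hs : 1 ≤ s) (hd : 3 ≤ d)
    (G : SimpleGraph (Fin n)) (hreg : G.IsRegularOfDegree d)
    (a b : Fin (4 * s - 2) → Fin n) (hadj : ∀ i, G.Adj (a i) (b i))
    (hdist : ∀ i j, i ≠ j →
      ((2 * k + 2 : ℕ) : ℕ∞) ≤ G.edist (a i) (a j) ∧
      ((2 * k + 2 : ℕ) : ℕ∞) ≤ G.edist (a i) (b j) ∧
      ((2 * k + 2 : ℕ) : ℕ∞) ≤ G.edist (b i) (a j) ∧
      ((2 * k + 2 : ℕ) : ℕ∞) ≤ G.edist (b i) (b j)) :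
    ((d : ℝ) + 2 * Real.sqrt ((d : ℝ) - 1)) * lapEig G (s + 1) ≤
      ((d : ℝ) - 2 * Real.sqrt ((d : ℝ) - 1)) * lapEig G (n - s + 1) +
        4 * ((d : ℝ) - 1) ^ ((3 : ℝ) / 2) / ((k : ℝ) + 1) := by
  have hn : 4 * s - 2 ≤ n := by
    simpa using Fintype.card_le_of_injective a fun i j h =>
      by_contra fun hij => by simpa [h] using (hdist i j hij).1
  have hd1 : (0 : ℝ) < (d : ℝ) - 1 := by
    have : (3 : ℝ) ≤ d := by exact_mod_cast hd
    linarith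
  set t := √((d : ℝ) - 1)
  have ht : 0 < t := Real.sqrt_pos.mpr hd1
  have hdt : (d : ℝ) = t ^ 2 + 1 := by rw [Real.sq_sqrt hd1.le]; ring
  have hpow : ((d : ℝ) - 1) ^ ((3 : ℝ) / 2) = ((d : ℝ) - 1) * t := by
    rw [show (3 : ℝ) / 2 = 1 + 1 / 2 by norm_num, Real.rpow_add hd1, Real.rpow_one,
      ← Real.sqrt_eq_rpow]
  rw [lapEig_succ G ⟨s, by omega⟩, lapEig_succ G ⟨n - s, by omega⟩, hpow]
  exact (posSemidef_lapMatrix ℝ G).1.mul_sortedEigs_le_of_pairwise_orthogonal _ _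
    (by simp only [Fintype.card_fin]; omega) (by positivity) (by nlinarith [sq_nonneg (t - 1)])
    (fun i => G.edgeBallVector (a i) (b i) k t⁻¹) (fun i => G.edgeBallVector (a i) (b i) k (-t⁻¹))
    (edgeBallVector_pairwise_orthogonal hdist _) (edgeBallVector_pairwise_orthogonal hdist _)
    (fun _ => edgeBallVector_neg_dotProduct_self)
    (fun i h => by simpa [edgeBallVector_left] using congrFun h (a i))
    fun i => edgeBallVector_lapMatrix_le_of_eq_sq_add_one hreg (hadj i) k ht hdt

/-- Let `s, k ≥ 1`, `d ≥ 3`, and let `G` be an `n`-vertex `d`-regular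
graph containing `4s-2` edges `(a i)(b i)` that are pairwise at distance at least `2k+2`
(all endpoint distances, in `ℕ∞`, are at least `2k+2`). Then
`(d+2√(d-1))·λ_{s+1}(G) ≤ (d-2√(d-1))·λ_{n-s+1}(G) + 4(d-1)^{3/2}/(k+1)`. -/
theorem stmt11 {n : ℕ} (s k d : ℕ) (hs : 1 ≤ s) (hk : 1 ≤ k) (hd : 3 ≤ d)
    (G : SimpleGraph (Fin n)) (hreg : G.IsRegularOfDegree d)
    (a b : Fin (4 * s - 2) → Fin n) (hadj : ∀ i, G.Adj (a i) (b i))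
    (hdist : ∀ i j, i ≠ j →
      ((2 * k + 2 : ℕ) : ℕ∞) ≤ G.edist (a i) (a j) ∧
      ((2 * k + 2 : ℕ) : ℕ∞) ≤ G.edist (a i) (b j) ∧
      ((2 * k + 2 : ℕ) : ℕ∞) ≤ G.edist (b i) (a j) ∧
      ((2 * k + 2 : ℕ) : ℕ∞) ≤ G.edist (b i) (b j)) :
    ((d : ℝ) + 2 * Real.sqrt ((d : ℝ) - 1)) * lapEig G (s + 1) ≤
      ((d : ℝ) - 2 * Real.sqrt ((d : ℝ) - 1)) * lapEig G (n - s + 1) +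
        4 * ((d : ℝ) - 1) ^ ((3 : ℝ) / 2) / ((k : ℝ) + 1) :=
  stmt11_general s k d hs hd G hreg a b hadj hdist
end

section
/- Let d ≥ 3 and k ≥ 1 be integers and let G be an n-vertex d-regular graph. Then there exists a set ℰ of edges of G that are pairwise at distance at least 2k + 2 from one another with |ℰ| ≥ n(d−2)·(d−1)^{−(2k+2)}/(4d). -/
/-!
Take a maximal family `E` of edges pairwise at distance at least `2k + 2`. By maximality every
edge of `G` lies within distance `2k + 1` of an edge of `E`, and at most `2d · M` edges are
that close to a given edge, where `M = 1 + d + d(d-1) + ⋯ + d(d-1)^{2k}` is the Moore bound on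
the size of a ball of radius `2k + 1`. As `G` has `nd/2` edges and `(d - 2) M < d (d-1)^{2k+1}`,
this gives `n (d - 2) ≤ 4d (d-1)^{2k+1} |E|`.
-/

open SimpleGraph Finset

attribute [local instance] Classical.propDecidable

/-- The distance (in `ℕ∞`) between two edges `e, f` of `G`: the minimum of `edist u v`
over endpoints `u ∈ e`, `v ∈ f`. -/
noncomputable def edgeDist {V : Type*} (G : SimpleGraph V) (e f : Sym2 V) : ℕ∞ :=
  ⨅ (u ∈ e) (v ∈ f), G.edist u v

theorem Finset.exists_subset_pairwise_and_forall_exists_not_rel {α : Type*} (S : Finset α)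
    {R : α → α → Prop} (hsymm : ∀ a b, R a b → R b a) (hirrefl : ∀ a, ¬ R a a) :
    ∃ E ⊆ S, (E : Set α).Pairwise R ∧ ∀ s ∈ S, ∃ e ∈ E, ¬ R e s := by
  obtain ⟨E, hEmem, hEmax⟩ :=
    (S.powerset.filter fun E : Finset α => (E : Set α).Pairwise R).exists_maximal
      ⟨∅, by simp⟩
  rw [mem_filter, mem_powerset] at hEmem
  refine ⟨E, hEmem.1, hEmem.2, fun s hs => ?_⟩
  by_contra! hfar
  have hsE : s ∉ E := fun h => hirrefl s (hfar s h)
  have hins : insert s E ∈ S.powerset.filter fun E : Finset α => (E : Set α).Pairwise R := by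
    rw [mem_filter, mem_powerset, coe_insert]
    exact ⟨insert_subset hs hEmem.1,
      hEmem.2.insert fun e he _ => ⟨hsymm _ _ (hfar e he), hfar e he⟩⟩
  exact hsE (hEmax hins (subset_insert s E) (mem_insert_self s E))

section EdgeDist

variable {V : Type*} {G : SimpleGraph V}

lemma edgeDist_le_of_mem {e f : Sym2 V} {u v : V} (hu : u ∈ e) (hv : v ∈ f) :
    edgeDist G e f ≤ G.edist u v :=
  iInf₂_le_of_le u hu (iInf₂_le v hv)

lemma le_edgeDist {e f : Sym2 V} {c : ℕ∞} (h : ∀ u ∈ e, ∀ v ∈ f, c ≤ G.edist u v) :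
    c ≤ edgeDist G e f :=
  le_iInf₂ fun u hu => le_iInf₂ fun v hv => h u hu v hv

lemma edgeDist_comm (e f : Sym2 V) : edgeDist G e f = edgeDist G f e := by
  have key : ∀ e f : Sym2 V, edgeDist G e f ≤ edgeDist G f e := fun e f =>
    le_edgeDist fun u hu v hv => edist_comm (G := G) ▸ edgeDist_le_of_mem hv hu
  exact le_antisymm (key e f) (key f e)

lemma edgeDist_self (e : Sym2 V) : edgeDist G e e = 0 := by
  induction e using Sym2.ind with
  | _ a b => exact nonpos_iff_eq_zero.mp <| edist_self (G := G) ▸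
      edgeDist_le_of_mem (Sym2.mem_mk_left a b) (Sym2.mem_mk_left a b)

lemma edgeDist_mk_mk (a b c d : V) :
    edgeDist G s(a, b) s(c, d) =
      (G.edist a c ⊓ G.edist a d) ⊓ (G.edist b c ⊓ G.edist b d) := by
  refine le_antisymm ?_ (le_edgeDist fun u hu v hv => ?_)
  · refine le_inf (le_inf ?_ ?_) (le_inf ?_ ?_) <;> exact edgeDist_le_of_mem (by simp) (by simp)
  · rw [Sym2.mem_iff] at hu hv
    rcases hu with rfl | rfl <;> rcases hv with rfl | rfl <;> simp

lemma exists_edist_le_of_edgeDist_le {e f : Sym2 V} {r : ℕ∞} (h : edgeDist G e f ≤ r) :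
    ∃ u ∈ e, ∃ v ∈ f, G.edist u v ≤ r := by
  induction e using Sym2.ind with
  | _ a b =>
  induction f using Sym2.ind with
  | _ c d =>
    rw [edgeDist_mk_mk] at h
    simp only [inf_le_iff] at h
    rcases h with (h | h) | (h | h) <;> exact ⟨_, by simp, _, by simp, h⟩

end EdgeDist

namespace SimpleGraph

variable {V : Type*} {G : SimpleGraph V}

lemma exists_adj_edist_eq_of_edist_eq_succ {u v : V} {i : ℕ} (h : G.edist u v = i + 1) :
    ∃ w, G.Adj u w ∧ G.edist w v = i := by
  obtain ⟨p, hp⟩ := exists_walk_of_edist_eq_coe (k := i + 1) (by exact_mod_cast h)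
  cases p with
  | nil => simp at hp
  | cons hadj q =>
    refine ⟨_, hadj, le_antisymm ?_ ?_⟩
    · simpa [Nat.succ_injective hp] using edist_le q
    · have htri := G.edist_triangle (u := u) (v := q.getVert 0) (w := v)
      rw [h, Walk.getVert_zero, (edist_eq_one_iff_adj).2 hadj, add_comm (i : ℕ∞)] at htri
      exact (ENat.add_le_add_iff_left ENat.one_ne_top).mp htri

variable [Fintype V]

variable (G) in
noncomputable def sphereFinset (c : V) (i : ℕ) : Finset V := {v | G.edist v c = i}

variable (G) in
noncomputable def closedBallFinset (c : V) (t : ℕ) : Finset V := {v | G.edist v c ≤ t}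

/-- The Moore bound: the largest possible number of vertices within distance `t` of a vertex
in a graph of maximum degree `d`. -/
def mooreBound (d t : ℕ) : ℕ := 1 + d * ∑ i ∈ range t, (d - 1) ^ i

lemma sub_two_mul_mooreBound_add_two {d : ℕ} (hd : 2 ≤ d) (t : ℕ) :
    (d - 2) * mooreBound d t + 2 = d * (d - 1) ^ t := by
  obtain ⟨c, rfl⟩ := Nat.exists_eq_add_of_le' hd
  rw [mooreBound, Nat.add_sub_cancel, show c + 2 - 1 = c + 1 by omega, ← geom_sum_mul_add c t]
  ring

@[simp]
lemma mem_sphereFinset {c v : V} {i : ℕ} : v ∈ G.sphereFinset c i ↔ G.edist v c = i := by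
  simp [sphereFinset]

@[simp]
lemma mem_closedBallFinset {c v : V} {t : ℕ} :
    v ∈ G.closedBallFinset c t ↔ G.edist v c ≤ t := by
  simp [closedBallFinset]

lemma card_neighborFinset_inter_sphereFinset_le {c u : V} {i : ℕ}
    (hu : G.edist u c = i + 1) :
    #(G.neighborFinset u ∩ G.sphereFinset c (i + 2)) ≤ G.degree u - 1 := by
  obtain ⟨w, hadj, hw⟩ := exists_adj_edist_eq_of_edist_eq_succ hu
  have hsub : G.neighborFinset u ∩ G.sphereFinset c (i + 2) ⊆ (G.neighborFinset u).erase w := by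
    intro x hx
    rw [mem_inter, mem_sphereFinset] at hx
    refine mem_erase.mpr ⟨?_, hx.1⟩
    rintro rfl
    rw [hw] at hx
    exact absurd (Nat.cast_injective hx.2) (by omega)
  calc #(G.neighborFinset u ∩ G.sphereFinset c (i + 2))
      ≤ #((G.neighborFinset u).erase w) := card_le_card hsub
    _ = G.degree u - 1 := by
      rw [card_erase_of_mem (by simpa using hadj), card_neighborFinset_eq_degree]

section MaxDegree

variable {d : ℕ} (hdeg : ∀ v, G.degree v ≤ d)
include hdeg

lemma card_sphereFinset_succ_le (c : V) (i : ℕ) :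
    #(G.sphereFinset c (i + 1)) ≤ d * (d - 1) ^ i := by
  induction i with
  | zero =>
    have hsub : G.sphereFinset c 1 ⊆ G.neighborFinset c := fun v hv => by
      simpa [edist_comm (u := v), edist_eq_one_iff_adj, adj_comm] using hv
    simpa using (card_le_card hsub).trans (card_neighborFinset_eq_degree G c ▸ hdeg c)
  | succ i ih =>
    -- every vertex at distance `i + 2` is a neighbour of a vertex at distance `i + 1`,
    -- one of whose neighbours is at distance `i`
    have hsub : G.sphereFinset c (i + 2) ⊆
        (G.sphereFinset c (i + 1)).biUnion
          fun u => G.neighborFinset u ∩ G.sphereFinset c (i + 2) := by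
      intro v hv
      obtain ⟨u, hadj, hu⟩ :=
        exists_adj_edist_eq_of_edist_eq_succ (i := i + 1) (by
          rw [mem_sphereFinset.mp hv]; push_cast; ring)
      exact mem_biUnion.mpr ⟨u, mem_sphereFinset.mpr hu,
        mem_inter.mpr ⟨(mem_neighborFinset _ _ _).mpr hadj.symm, hv⟩⟩
    calc #(G.sphereFinset c (i + 2))
        ≤ #(G.sphereFinset c (i + 1)) * (d - 1) :=
          (card_le_card hsub).trans <| card_biUnion_le_card_mul _ _ _ fun u hu =>
            (card_neighborFinset_inter_sphereFinset_le (mem_sphereFinset.mp hu)).trans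
              (Nat.sub_le_sub_right (hdeg u) 1)
      _ ≤ d * (d - 1) ^ i * (d - 1) := Nat.mul_le_mul_right _ ih
      _ = d * (d - 1) ^ (i + 1) := by ring

lemma card_closedBallFinset_le_mooreBound (c : V) (t : ℕ) :
    #(G.closedBallFinset c t) ≤ mooreBound d t := by
  have hsub : G.closedBallFinset c t ⊆ (range (t + 1)).biUnion (G.sphereFinset c) := by
    intro v hv
    rw [mem_closedBallFinset] at hv
    lift G.edist v c to ℕ using ne_top_of_le_ne_top (by simp) hv with j hj
    simpa [← hj] using (show j ≤ t by exact_mod_cast hv)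
  calc #(G.closedBallFinset c t)
      ≤ ∑ i ∈ range (t + 1), #(G.sphereFinset c i) :=
        (card_le_card hsub).trans card_biUnion_le
    _ = #(G.sphereFinset c 0) + ∑ i ∈ range t, #(G.sphereFinset c (i + 1)) := by
      rw [sum_range_succ', add_comm]
    _ ≤ 1 + ∑ i ∈ range t, d * (d - 1) ^ i := by
      gcongr with i
      · exact card_le_one.mpr fun a ha b hb => by simp_all
      · exact card_sphereFinset_succ_le hdeg c i
    _ = mooreBound d t := by rw [mooreBound, mul_sum]

lemma card_filter_edgeDist_le (f : Sym2 V) (r : ℕ) :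
    #{e ∈ G.edgeFinset | edgeDist G f e ≤ r} ≤ 2 * mooreBound d r * d := by
  induction f using Sym2.ind with
  | _ a b =>
  have hsub : {e ∈ G.edgeFinset | edgeDist G s(a, b) e ≤ r} ⊆
      (G.closedBallFinset a r ∪ G.closedBallFinset b r).biUnion fun v => G.incidenceFinset v := by
    intro e he
    rw [mem_filter, mem_edgeFinset] at he
    obtain ⟨u, hu, v, hv, huv⟩ := exists_edist_le_of_edgeDist_le he.2
    refine mem_biUnion.mpr ⟨v, ?_, (mem_incidenceFinset _ _ _).mpr ⟨he.1, hv⟩⟩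
    rw [Sym2.mem_iff] at hu
    rcases hu with rfl | rfl <;> simp [edist_comm (u := v), huv]
  calc _ ≤ #(G.closedBallFinset a r ∪ G.closedBallFinset b r) * d :=
        (card_le_card hsub).trans <| card_biUnion_le_card_mul _ _ _ fun v _ =>
          card_incidenceFinset_eq_degree G v ▸ hdeg v
    _ ≤ (mooreBound d r + mooreBound d r) * d := by
        gcongr
        exact (card_union_le _ _).trans (add_le_add
          (card_closedBallFinset_le_mooreBound hdeg a r)
          (card_closedBallFinset_le_mooreBound hdeg b r))
    _ = 2 * mooreBound d r * d := by ring

end MaxDegree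

theorem exists_pairwise_le_edgeDist_and_card_mul_le {d : ℕ} (hreg : G.IsRegularOfDegree d)
    (hd : 2 ≤ d) (r : ℕ) :
    ∃ E ⊆ G.edgeFinset,
      (E : Set (Sym2 V)).Pairwise (fun e f => ((r + 1 : ℕ) : ℕ∞) ≤ edgeDist G e f) ∧
      Fintype.card V * (d - 2) ≤ 4 * d * (d - 1) ^ r * #E := by
  obtain ⟨E, hEsub, hEsep, hEmax⟩ :=
    G.edgeFinset.exists_subset_pairwise_and_forall_exists_not_rel
      (R := fun e f => ((r + 1 : ℕ) : ℕ∞) ≤ edgeDist G e f)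
      (fun e f h => edgeDist_comm (G := G) e f ▸ h) (fun e => by simp [edgeDist_self])
  refine ⟨E, hEsub, hEsep, ?_⟩
  have hcover :
      G.edgeFinset ⊆ E.biUnion fun f => {e ∈ G.edgeFinset | edgeDist G f e ≤ r} := by
    intro e he
    obtain ⟨f, hf, hfe⟩ := hEmax e he
    have hlt : edgeDist G f e < (r : ℕ∞) + 1 := by exact_mod_cast not_le.mp hfe
    exact mem_biUnion.mpr
      ⟨f, hf, mem_filter.mpr ⟨he, (ENat.lt_add_one_iff (ENat.natCast_ne_top r)).mp hlt⟩⟩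
  have hcount : #G.edgeFinset ≤ #E * (2 * mooreBound d r * d) :=
    (card_le_card hcover).trans <| card_biUnion_le_card_mul _ _ _ fun f _ =>
      card_filter_edgeDist_le (fun v => (hreg v).le) f r
  have hhandshake : Fintype.card V * d = 2 * #G.edgeFinset := by
    rw [← G.sum_degrees_eq_twice_card_edges, sum_congr rfl fun v _ => hreg v, sum_const,
      card_univ, smul_eq_mul]
  refine Nat.le_of_mul_le_mul_right ?_ (by omega : 0 < d)
  calc Fintype.card V * (d - 2) * d
      = 2 * #G.edgeFinset * (d - 2) := by rw [← hhandshake]; ring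
    _ ≤ 2 * (#E * (2 * mooreBound d r * d)) * (d - 2) := by gcongr
    _ = 4 * d * #E * ((d - 2) * mooreBound d r) := by ring
    _ ≤ 4 * d * #E * (d * (d - 1) ^ r) := by
      have := sub_two_mul_mooreBound_add_two hd r
      exact Nat.mul_le_mul_left _ (by omega)
    _ = 4 * d * (d - 1) ^ r * #E * d := by ring

end SimpleGraph

theorem stmt13_general {n : ℕ} (d k : ℕ) (hd : 3 ≤ d)
    (G : SimpleGraph (Fin n)) (hreg : G.IsRegularOfDegree d) :
    ∃ E : Finset (Sym2 (Fin n)), (↑E : Set (Sym2 (Fin n))) ⊆ G.edgeSet ∧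
      (∀ e ∈ E, ∀ f ∈ E, e ≠ f → ((2 * k + 2 : ℕ) : ℕ∞) ≤ edgeDist G e f) ∧
      (n : ℝ) * ((d : ℝ) - 2) * ((d : ℝ) - 1) ^ (-((2 * k + 2 : ℕ) : ℝ)) / (4 * d) ≤
        E.card := by
  obtain ⟨E, hEsub, hEsep, hcard⟩ :=
    G.exists_pairwise_le_edgeDist_and_card_mul_le hreg (by omega) (2 * k + 1)
  refine ⟨E, fun e he => mem_edgeFinset.mp (hEsub he), fun e he f hf hef => hEsep he hf hef, ?_⟩
  have hd1 : (1 : ℝ) ≤ (d : ℝ) - 1 := by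
    have : (3 : ℝ) ≤ d := by exact_mod_cast hd
    linarith
  have hcardR : (n : ℝ) * ((d : ℝ) - 2) ≤ 4 * d * ((d : ℝ) - 1) ^ (2 * k + 1) * #E := by
    rw [Fintype.card_fin] at hcard
    have := (Nat.cast_le (α := ℝ)).mpr hcard
    push_cast [Nat.cast_sub (by omega : 2 ≤ d), Nat.cast_sub (by omega : 1 ≤ d)] at this
    exact this
  rw [Real.rpow_neg (by linarith), Real.rpow_natCast, ← div_eq_mul_inv,
    div_div, div_le_iff₀ (by positivity)]
  calc (n : ℝ) * ((d : ℝ) - 2)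
      ≤ 4 * d * ((d : ℝ) - 1) ^ (2 * k + 1) * #E := hcardR
    _ ≤ 4 * d * ((d : ℝ) - 1) ^ (2 * k + 1) * #E * ((d : ℝ) - 1) :=
      le_mul_of_one_le_right (by positivity) hd1
    _ = #E * (((d : ℝ) - 1) ^ (2 * k + 2) * (4 * d)) := by ring

/-- Every `n`-vertex `d`-regular graph (`d ≥ 3`, `k ≥ 1`) contains a set
`ℰ` of edges, pairwise at distance at least `2k+2`, with
`|ℰ| ≥ n(d-2)·(d-1)^{-(2k+2)}/(4d)`. -/
theorem stmt13 {n : ℕ} (d k : ℕ) (hd : 3 ≤ d) (hk : 1 ≤ k)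
    (G : SimpleGraph (Fin n)) (hreg : G.IsRegularOfDegree d) :
    ∃ E : Finset (Sym2 (Fin n)), (↑E : Set (Sym2 (Fin n))) ⊆ G.edgeSet ∧
      (∀ e ∈ E, ∀ f ∈ E, e ≠ f → ((2 * k + 2 : ℕ) : ℕ∞) ≤ edgeDist G e f) ∧
      (n : ℝ) * ((d : ℝ) - 2) * ((d : ℝ) - 1) ^ (-((2 * k + 2 : ℕ) : ℝ)) / (4 * d) ≤
        E.card :=
  stmt13_general d k hd G hreg
end
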